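/- arXiv:2302.05883 — 7 statements merged into one kernel-verified Lean document; each statement's English description precedes it below -/
import Mathlib

section
/- Let n ≥ 2 and let x_1,…,x_n be points on the unit circle in ℂ forming a single cluster, i.e. δ ≤ |x_i − x_j| ≤ τδ for all i ≠ j, with 0 < δ < 1 and τ > 1, and let amplitudes α_1,…,α_n ∈ ℂ satisfy 𝔪 ≤ |α_j| ≤ 𝔐 for some 0 < 𝔪 ≤ 𝔐. Then there exist constants c > 0 and C > 0 depending only on n, τ, 𝔪, 𝔐 (not on δ or the particular configuration) such that: for all perturbed moments m̃_k = m_k + ε_k, k = 0,…,2n−1, with |ε_k| ≤ ε ≤ c δ^{3n−3}, the perturbed Hankel matrix H̃_n = (m̃_{i+j})_{i,j=0}^{n−1} is invertible, and the unique solution q = (q_0,…,q_{n−1}) of H̃_n q = −(m̃_n,…,m̃_{2n−1})ᵀ satisfies |p_i − q_i| ≤ C δ^{3−3n} ε for every i, where p(z) = ∏_{j=1}^n (z − x_j) = z^n + ∑_{i=0}^{n−1} p_i z^i is the monic Prony polynomial. -/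
/-! The Hankel matrix of the exact moments factors as `H = Vᵀ D V`, with `V` the Vandermonde
matrix of the nodes and `D = diag α`. The inverse of `V` is the coefficient matrix of the Lagrange
basis polynomials, whose entries are `O(δ^{1-n})` when the nodes are `δ`-separated on the unit
circle; hence `‖H⁻¹‖ = O(δ^{2-2n})` in the `ℓ∞` operator norm. The coefficient vector `p` of
the Prony polynomial solves `H p = -(m_n, …, m_{2n-1})`, since the polynomial vanishes at every
node. Perturbing the moments by `ε` moves `H` by at most `n ε`, so once `‖H⁻¹‖ n ε ≤ 1/2` the
perturbed Hankel matrix is still invertible and its solution `q` differs from `p` by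
`O(‖H⁻¹‖ ε) = O(δ^{2-2n} ε)`, which is at most `O(δ^{3-3n} ε)`. -/

open Matrix

open Polynomial Finset Lagrange

attribute [local instance] Matrix.linftyOpNormedAddCommGroup Matrix.linftyOpNormedRing

namespace Matrix

variable {𝕜 : Type*} [NormedField 𝕜] {m n : Type*} [Fintype m] [Fintype n]

theorem linfty_opNorm_le_card_mul {A : Matrix m n 𝕜} {a : ℝ} (ha : 0 ≤ a)
    (h : ∀ i j, ‖A i j‖ ≤ a) : ‖A‖ ≤ Fintype.card n * a := by
  lift a to NNReal using ha
  rw [linfty_opNorm_def]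
  norm_cast
  refine Finset.sup_le fun i _ => ?_
  calc ∑ j, ‖A i j‖₊ ≤ ∑ _j : n, a := Finset.sum_le_sum fun j _ => h i j
    _ = Fintype.card n * a := by simp

variable [DecidableEq n]

theorem norm_le_two_mul_norm_one_add_mulVec {A : Matrix n n 𝕜} (hA : ‖A‖ ≤ 1 / 2)
    (v : n → 𝕜) : ‖v‖ ≤ 2 * ‖(1 + A) *ᵥ v‖ := by
  have hAv : ‖A *ᵥ v‖ ≤ 1 / 2 * ‖v‖ :=
    (linfty_opNorm_mulVec A v).trans (mul_le_mul_of_nonneg_right hA (norm_nonneg v))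
  have hsplit : v = (1 + A) *ᵥ v - A *ᵥ v := by
    rw [add_mulVec, one_mulVec, add_sub_cancel_right]
  have := norm_sub_le ((1 + A) *ᵥ v) (A *ᵥ v)
  rw [← hsplit] at this
  linarith

theorem isUnit_one_add_of_norm_le_half {A : Matrix n n 𝕜} (hA : ‖A‖ ≤ 1 / 2) :
    IsUnit (1 + A) := by
  refine mulVec_injective_iff_isUnit.mp fun v w hvw => sub_eq_zero.mp (norm_le_zero_iff.mp ?_)
  have := norm_le_two_mul_norm_one_add_mulVec hA (v - w)
  rwa [mulVec_sub, hvw, sub_self, norm_zero, mul_zero] at this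

theorem isUnit_det_add_of_norm_inv_mul_norm_le_half {H E : Matrix n n 𝕜} (hH : IsUnit H.det)
    (hsmall : ‖H⁻¹‖ * ‖E‖ ≤ 1 / 2) : IsUnit (H + E).det := by
  have hfactor : H + E = H * (1 + H⁻¹ * E) := by
    rw [Matrix.mul_add, Matrix.mul_one, ← Matrix.mul_assoc, mul_nonsing_inv H hH,
      Matrix.one_mul]
  have hunit := isUnit_one_add_of_norm_le_half ((linfty_opNorm_mul _ _).trans hsmall)
  rw [hfactor, det_mul]
  exact hH.mul ((isUnit_iff_isUnit_det _).mp hunit)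

theorem norm_sub_le_of_mulVec_eq {H E : Matrix n n 𝕜} (hH : IsUnit H.det)
    (hsmall : ‖H⁻¹‖ * ‖E‖ ≤ 1 / 2) {p q b b' : n → 𝕜} (hp : H *ᵥ p = b)
    (hq : (H + E) *ᵥ q = b') : ‖p - q‖ ≤ 2 * ‖H⁻¹‖ * (‖E‖ * ‖p‖ + ‖b - b'‖) := by
  have hinv : H⁻¹ * (H + E) = 1 + H⁻¹ * E := by rw [Matrix.mul_add, nonsing_inv_mul H hH]
  have hres : (1 + H⁻¹ * E) *ᵥ (p - q) = H⁻¹ *ᵥ (E *ᵥ p + (b - b')) := by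
    rw [← hinv, ← mulVec_mulVec, mulVec_sub, hq, add_mulVec, hp]
    congr 1
    abel
  calc ‖p - q‖ ≤ 2 * ‖(1 + H⁻¹ * E) *ᵥ (p - q)‖ :=
        norm_le_two_mul_norm_one_add_mulVec ((linfty_opNorm_mul _ _).trans hsmall) _
    _ ≤ 2 * (‖H⁻¹‖ * (‖E‖ * ‖p‖ + ‖b - b'‖)) := by
        rw [hres]
        gcongr
        refine (linfty_opNorm_mulVec _ _).trans ?_
        gcongr
        exact (norm_add_le _ _).trans (by gcongr; exact linfty_opNorm_mulVec _ _)
    _ = 2 * ‖H⁻¹‖ * (‖E‖ * ‖p‖ + ‖b - b'‖) := by ring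

end Matrix

section Hankel

variable {R : Type*} [CommRing R]

def hankel (m : ℕ → R) (n : ℕ) : Matrix (Fin n) (Fin n) R :=
  of fun i j => m (i + j)

def moment {ι : Type*} [Fintype ι] (α x : ι → R) (k : ℕ) : R :=
  ∑ j, α j * x j ^ k

theorem hankel_moment_eq {n : ℕ} (α x : Fin n → R) :
    hankel (moment α x) n = (vandermonde x)ᵀ * diagonal α * vandermonde x := by
  ext i k
  rw [mul_apply]
  simp only [hankel, moment, of_apply, mul_diagonal, transpose_apply, vandermonde, pow_add]
  exact Finset.sum_congr rfl fun j _ => by ring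

theorem hankel_moment_mulVec_coeff {ι : Type*} [Fintype ι] {α x : ι → R} {n : ℕ} {P : R[X]}
    (hP : P.Monic) (hdeg : P.natDegree = n) (hroot : ∀ j, P.eval (x j) = 0) :
    hankel (moment α x) n *ᵥ (fun k => P.coeff k) = fun i : Fin n => -moment α x (n + i) := by
  have hsum : ∀ j, ∑ k : Fin n, P.coeff k * x j ^ (k : ℕ) = -x j ^ n := fun j => by
    have := eval_eq_sum_range' (hdeg.trans_lt n.lt_succ_self) (x j)
    rw [hroot j, Finset.sum_range_succ, ← hdeg, hP.coeff_natDegree, hdeg,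
      ← Fin.sum_univ_eq_sum_range (fun k => P.coeff k * x j ^ k)] at this
    linear_combination -this
  ext i
  calc ∑ k : Fin n, moment α x (i + k) * P.coeff k
      = ∑ j, α j * x j ^ (i : ℕ) * ∑ k : Fin n, P.coeff k * x j ^ (k : ℕ) := by
        simp only [moment, Finset.sum_mul, Finset.mul_sum, pow_add]
        rw [Finset.sum_comm]
        exact Finset.sum_congr rfl fun _ _ => Finset.sum_congr rfl fun _ _ => by ring
    _ = -moment α x (n + i) := by
        simp only [hsum, moment, ← Finset.sum_neg_distrib, pow_add]
        exact Finset.sum_congr rfl fun _ _ => by ring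

theorem hankel_moment_mulVec_coeff_nodal [Nontrivial R] {n : ℕ} (α x : Fin n → R) :
    hankel (moment α x) n *ᵥ (fun k : Fin n => (nodal univ x).coeff k) =
      fun i : Fin n => -moment α x (n + i) :=
  hankel_moment_mulVec_coeff nodal_monic (by rw [natDegree_nodal, card_univ, Fintype.card_fin])
    fun j => eval_nodal_at_node (mem_univ j)

end Hankel

section HankelPerturbation

variable {𝕜 : Type*} [NormedField 𝕜] {n : ℕ} {m m' : ℕ → 𝕜} {ε K : ℝ}

theorem norm_hankel_sub_le (hε : 0 ≤ ε) (hm : ∀ k < 2 * n, ‖m' k - m k‖ ≤ ε) :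
    ‖hankel m' n - hankel m n‖ ≤ n * ε := by
  simpa using linfty_opNorm_le_card_mul (A := hankel m' n - hankel m n) hε
    fun i j => hm _ (by omega)

theorem norm_inv_hankel_mul_norm_hankel_sub_le_half (hK : ‖(hankel m n)⁻¹‖ ≤ K)
    (hsmall : K * (n * ε) ≤ 1 / 2) (hε : 0 ≤ ε) (hm : ∀ k < 2 * n, ‖m' k - m k‖ ≤ ε) :
    ‖(hankel m n)⁻¹‖ * ‖hankel m' n - hankel m n‖ ≤ 1 / 2 :=
  (mul_le_mul hK (norm_hankel_sub_le hε hm) (norm_nonneg _) ((norm_nonneg _).trans hK)).trans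
    hsmall

theorem isUnit_det_hankel_of_norm_sub_le (hH : IsUnit (hankel m n).det)
    (hK : ‖(hankel m n)⁻¹‖ ≤ K) (hsmall : K * (n * ε) ≤ 1 / 2) (hε : 0 ≤ ε)
    (hm : ∀ k < 2 * n, ‖m' k - m k‖ ≤ ε) : IsUnit (hankel m' n).det := by
  simpa using isUnit_det_add_of_norm_inv_mul_norm_le_half hH
    (norm_inv_hankel_mul_norm_hankel_sub_le_half hK hsmall hε hm)

theorem norm_sub_le_of_hankel_mulVec_eq (hH : IsUnit (hankel m n).det)
    (hK : ‖(hankel m n)⁻¹‖ ≤ K) (hsmall : K * (n * ε) ≤ 1 / 2) (hε : 0 ≤ ε)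
    (hm : ∀ k < 2 * n, ‖m' k - m k‖ ≤ ε) {p q : Fin n → 𝕜}
    (hp : hankel m n *ᵥ p = fun i : Fin n => -m (n + i))
    (hq : hankel m' n *ᵥ q = fun i : Fin n => -m' (n + i)) :
    ‖p - q‖ ≤ 2 * K * (n * ε * ‖p‖ + ε) := by
  have hK0 : 0 ≤ K := (norm_nonneg _).trans hK
  have hrhs : ‖(fun i : Fin n => -m (n + i)) - fun i : Fin n => -m' (n + i)‖ ≤ ε := by
    refine (pi_norm_le_iff_of_nonneg hε).mpr fun k => ?_
    rw [Pi.sub_apply, neg_sub_neg]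
    exact hm (n + k) (by omega)
  have hq' : (hankel m n + (hankel m' n - hankel m n)) *ᵥ q = fun i : Fin n => -m' (n + i) := by
    rwa [add_sub_cancel]
  grw [norm_sub_le_of_mulVec_eq hH (norm_inv_hankel_mul_norm_hankel_sub_le_half hK hsmall hε hm)
    hp hq', hK, norm_hankel_sub_le hε hm, hrhs]

end HankelPerturbation

section Lagrange

variable {K : Type*} [Field K] {n : ℕ} {α x : Fin n → K}

noncomputable def lagrangeCoeffMatrix (x : Fin n → K) : Matrix (Fin n) (Fin n) K :=
  of fun i j => (Lagrange.basis univ x j).coeff i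

theorem vandermonde_mul_lagrangeCoeffMatrix (hx : Function.Injective x) :
    vandermonde x * lagrangeCoeffMatrix x = 1 := by
  ext k j
  have hdeg : (Lagrange.basis univ x j).natDegree < n := by
    rw [natDegree_basis hx.injOn (mem_univ j), card_univ, Fintype.card_fin]
    exact Nat.sub_lt (Nat.zero_lt_of_lt j.isLt) one_pos
  have heval : ∑ i : Fin n, x k ^ (i : ℕ) * (Lagrange.basis univ x j).coeff i =
      (Lagrange.basis univ x j).eval (x k) := by
    rw [eval_eq_sum_range' hdeg, ← Fin.sum_univ_eq_sum_range]
    simp only [mul_comm]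
  simp only [mul_apply, vandermonde, lagrangeCoeffMatrix, of_apply, heval]
  rcases eq_or_ne j k with rfl | hjk
  · rw [eval_basis_self hx.injOn (mem_univ j), one_apply_eq]
  · rw [eval_basis_of_ne hjk (mem_univ k), one_apply_ne' hjk]

theorem lagrangeCoeffMatrix_mul_hankel_moment (hx : Function.Injective x) (hα : ∀ j, α j ≠ 0) :
    lagrangeCoeffMatrix x * diagonal α⁻¹ * (lagrangeCoeffMatrix x)ᵀ * hankel (moment α x) n =
      1 := by
  have hWL := vandermonde_mul_lagrangeCoeffMatrix hx
  have hDD : diagonal α⁻¹ * diagonal α = 1 := by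
    rw [diagonal_mul_diagonal, ← diagonal_one]
    exact congrArg diagonal (funext fun j => inv_mul_cancel₀ (hα j))
  rw [hankel_moment_eq]
  calc _ = lagrangeCoeffMatrix x * diagonal α⁻¹ * (vandermonde x * lagrangeCoeffMatrix x)ᵀ *
        diagonal α * vandermonde x := by simp only [transpose_mul, Matrix.mul_assoc]
    _ = lagrangeCoeffMatrix x * vandermonde x := by
        rw [hWL, transpose_one, Matrix.mul_one, Matrix.mul_assoc _ (diagonal α⁻¹), hDD,
          Matrix.mul_one]
    _ = 1 := mul_eq_one_comm.mp hWL

theorem isUnit_det_hankel_moment (hx : Function.Injective x) (hα : ∀ j, α j ≠ 0) :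
    IsUnit (hankel (moment α x) n).det :=
  isUnit_det_of_left_inverse (lagrangeCoeffMatrix_mul_hankel_moment hx hα)

theorem inv_hankel_moment (hx : Function.Injective x) (hα : ∀ j, α j ≠ 0) :
    (hankel (moment α x) n)⁻¹ = lagrangeCoeffMatrix x * diagonal α⁻¹ * (lagrangeCoeffMatrix x)ᵀ :=
  inv_eq_left_inv (lagrangeCoeffMatrix_mul_hankel_moment hx hα)

end Lagrange

section Cluster

theorem norm_coeff_nodal_le {ι : Type*} (s : Finset ι) (v : ι → ℂ) (hv : ∀ i ∈ s, ‖v i‖ ≤ 1)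
    (k : ℕ) : ‖(nodal s v).coeff k‖ ≤ 2 ^ #s := by
  have hroots : (nodal s v).roots = s.val.map v := by
    rw [nodal, Finset.prod_eq_multiset_prod, ← roots_multiset_prod_X_sub_C (s.val.map v),
      Multiset.map_map]
    rfl
  have h := coeff_le_of_roots_le (f := RingHom.id ℂ) (B := 1) k nodal_monic
    (IsAlgClosed.splits _) (by
      rw [Polynomial.map_id, hroots]
      intro z hz
      obtain ⟨i, hi, rfl⟩ := Multiset.mem_map.mp hz
      exact hv i hi)
  rw [Polynomial.map_id, one_pow, one_mul, natDegree_nodal] at h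
  exact h.trans (mod_cast Nat.choose_le_two_pow _ _)

theorem norm_coeff_basis_le {ι : Type*} [DecidableEq ι] {s : Finset ι} {v : ι → ℂ} {δ : ℝ}
    (hδ : 0 < δ) (hv : ∀ i ∈ s, ‖v i‖ ≤ 1) (hsep : ∀ i ∈ s, ∀ j ∈ s, i ≠ j → δ ≤ ‖v i - v j‖)
    {i : ι} (hi : i ∈ s) (k : ℕ) :
    ‖(Lagrange.basis s v i).coeff k‖ ≤ 2 ^ (#s - 1) / δ ^ (#s - 1) := by
  have hweight : ‖nodalWeight s v i‖ ≤ (δ ^ (#s - 1))⁻¹ := by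
    rw [nodalWeight, norm_prod, ← card_erase_of_mem hi, ← inv_pow, ← prod_const]
    refine prod_le_prod (fun _ _ => norm_nonneg _) fun j hj => ?_
    obtain ⟨hji, hj⟩ := mem_erase.mp hj
    rw [norm_inv]
    exact inv_anti₀ hδ (hsep i hi j hj hji.symm)
  have hnodal := norm_coeff_nodal_le (s.erase i) v (fun j hj => hv j (mem_of_mem_erase hj)) k
  rw [card_erase_of_mem hi] at hnodal
  rw [basis_eq_prod_sub_inv_mul_nodal_div hi, ← nodal_erase_eq_nodal_div hi, coeff_C_mul,
    norm_mul, div_eq_inv_mul]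
  exact mul_le_mul hweight hnodal (norm_nonneg _) (by positivity)

variable {n : ℕ} {α x : Fin n → ℂ} {δ mA : ℝ}

theorem norm_coeff_nodal_univ_le (hx : ∀ j, ‖x j‖ ≤ 1) :
    ‖fun k : Fin n => (nodal univ x).coeff k‖ ≤ 2 ^ n := by
  refine (pi_norm_le_iff_of_nonneg (by positivity)).mpr fun k => ?_
  simpa using norm_coeff_nodal_le univ x (fun j _ => hx j) k

theorem injective_of_le_norm_sub (hδ : 0 < δ) (hsep : ∀ i j, i ≠ j → δ ≤ ‖x i - x j‖) :
    Function.Injective x := fun i j hij => by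
  by_contra hne
  have := hsep i j hne
  rw [hij, sub_self, norm_zero] at this
  linarith

theorem norm_lagrangeCoeffMatrix_apply_le (hδ : 0 < δ) (hx : ∀ j, ‖x j‖ ≤ 1)
    (hsep : ∀ i j, i ≠ j → δ ≤ ‖x i - x j‖) (i j : Fin n) :
    ‖lagrangeCoeffMatrix x i j‖ ≤ 2 ^ (n - 1) / δ ^ (n - 1) := by
  have := norm_coeff_basis_le hδ (fun j _ => hx j) (fun i _ j _ => hsep i j) (mem_univ j) i
  rwa [card_univ, Fintype.card_fin] at this

theorem norm_inv_hankel_moment_le (hδ : 0 < δ) (hx : ∀ j, ‖x j‖ ≤ 1)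
    (hsep : ∀ i j, i ≠ j → δ ≤ ‖x i - x j‖) (hmA : 0 < mA) (hα : ∀ j, mA ≤ ‖α j‖) :
    ‖(hankel (moment α x) n)⁻¹‖ ≤ n ^ 2 * 4 ^ (n - 1) / mA / (δ ^ (n - 1)) ^ 2 := by
  have hα0 : ∀ j, α j ≠ 0 := fun j => norm_pos_iff.mp (hmA.trans_le (hα j))
  have hentry := norm_lagrangeCoeffMatrix_apply_le hδ hx hsep
  have hL : ‖lagrangeCoeffMatrix x‖ ≤ n * (2 ^ (n - 1) / δ ^ (n - 1)) := by
    simpa using linfty_opNorm_le_card_mul (A := lagrangeCoeffMatrix x) (by positivity) hentry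
  have hLt : ‖(lagrangeCoeffMatrix x)ᵀ‖ ≤ n * (2 ^ (n - 1) / δ ^ (n - 1)) := by
    simpa using linfty_opNorm_le_card_mul (A := (lagrangeCoeffMatrix x)ᵀ) (by positivity)
      fun i j => hentry j i
  have hD : ‖diagonal α⁻¹‖ ≤ mA⁻¹ := by
    rw [linfty_opNorm_diagonal]
    refine (pi_norm_le_iff_of_nonneg (by positivity)).mpr fun j => ?_
    rw [Pi.inv_apply, norm_inv]
    exact inv_anti₀ hmA (hα j)
  rw [inv_hankel_moment (injective_of_le_norm_sub hδ hsep) hα0]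
  calc _ ≤ ‖lagrangeCoeffMatrix x‖ * ‖diagonal α⁻¹‖ * ‖(lagrangeCoeffMatrix x)ᵀ‖ :=
        (linfty_opNorm_mul _ _).trans (by gcongr; exact linfty_opNorm_mul _ _)
    _ ≤ n * (2 ^ (n - 1) / δ ^ (n - 1)) * mA⁻¹ * (n * (2 ^ (n - 1) / δ ^ (n - 1))) := by
        gcongr
    _ = _ := by
        rw [show (4 : ℝ) = 2 ^ 2 by norm_num, ← pow_mul, mul_comm 2, pow_mul]
        field_simp

end Cluster

theorem prony_naive_coefficient_accuracy_general
    (n : ℕ) (hn : 2 ≤ n) (τ mA MA : ℝ) (hmA : 0 < mA) :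
    ∃ c C₁ : ℝ, 0 < c ∧ 0 < C₁ ∧
      ∀ (δ : ℝ) (x α : Fin n → ℂ),
        0 < δ → δ < 1 →
        (∀ j, ‖x j‖ = 1) →
        (∀ i j, i ≠ j →
          δ ≤ ‖x i - x j‖ ∧ ‖x i - x j‖ ≤ τ * δ) →
        (∀ j, mA ≤ ‖α j‖ ∧ ‖α j‖ ≤ MA) →
        ∀ (ε : ℝ) (mt : ℕ → ℂ),
          0 ≤ ε → ε ≤ c * δ ^ (3 * n - 3) →
          (∀ k, k < 2 * n → ‖mt k - ∑ j, α j * x j ^ k‖ ≤ ε) →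
          IsUnit (Matrix.of fun i j : Fin n => mt ((i : ℕ) + (j : ℕ))).det ∧
          ∀ q : Fin n → ℂ,
            ((Matrix.of fun i j : Fin n => mt ((i : ℕ) + (j : ℕ))) *ᵥ q =
              fun i : Fin n => -mt (n + (i : ℕ))) →
            ∀ i : Fin n,
              ‖
                  (∏ j, (Polynomial.X - Polynomial.C (x j))).coeff (i : ℕ) - q i‖ ≤
                C₁ * δ ^ (3 - 3 * (n : ℤ)) * ε := by
  set κ : ℝ := n ^ 2 * 4 ^ (n - 1) / mA
  have hκ : 0 < κ := by positivity
  refine ⟨1 / (2 * n * κ), 2 * κ * (n * 2 ^ n + 1), by positivity, by positivity, ?_⟩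
  intro δ x α hδ hδ1 hx hsep hα ε mt hε hεc hmt
  set t := δ ^ (n - 1)
  have ht0 : 0 < t := pow_pos hδ _
  have ht1 : t ≤ 1 := pow_le_one₀ hδ.le hδ1.le
  have hcube : δ ^ (3 * n - 3) = t ^ 3 := by rw [← pow_mul]; congr 1; omega
  have hcube_inv : δ ^ (3 - 3 * (n : ℤ)) = (t ^ 3)⁻¹ := by
    rw [← hcube, ← zpow_natCast, ← _root_.zpow_neg]
    congr 1
    omega
  have hx' : ∀ j, ‖x j‖ ≤ 1 := fun j => (hx j).le
  have hsep' : ∀ i j, i ≠ j → δ ≤ ‖x i - x j‖ := fun i j h => (hsep i j h).1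
  have hH := isUnit_det_hankel_moment (injective_of_le_norm_sub hδ hsep')
    fun j => norm_pos_iff.mp (hmA.trans_le (hα j).1)
  have hK := norm_inv_hankel_moment_le hδ hx' hsep' hmA fun j => (hα j).1
  have hsmall : κ / t ^ 2 * (n * ε) ≤ 1 / 2 := calc
    _ ≤ κ / t ^ 2 * (n * (1 / (2 * n * κ) * t ^ 3)) := by rw [← hcube]; gcongr
    _ = t / 2 := by field_simp
    _ ≤ 1 / 2 := by linarith
  refine ⟨isUnit_det_hankel_of_norm_sub_le hH hK hsmall hε hmt, fun q hq i => ?_⟩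
  calc _ ≤ ‖(fun k : Fin n => (nodal univ x).coeff k) - q‖ := norm_le_pi_norm _ i
    _ ≤ 2 * (κ / t ^ 2) * (n * ε * 2 ^ n + ε) := by
        grw [norm_sub_le_of_hankel_mulVec_eq hH hK hsmall hε hmt
          (hankel_moment_mulVec_coeff_nodal α x) hq, norm_coeff_nodal_univ_le hx']
    _ = 2 * κ * (n * 2 ^ n + 1) * (t ^ 3)⁻¹ * ε * t := by field_simp
    _ ≤ _ := hcube_inv ▸ mul_le_of_le_one_right (by positivity) ht1

/-- Naive accuracy of the Prony polynomial coefficients for a single cluster: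
With nodes on the unit circle forming a single cluster of extent `δ` and amplitudes bounded
between `mA` and `MA`, there are constants `c, C₁` (depending only on `n, τ, mA, MA`) such that
for noise level `ε ≤ c δ^{3n-3}` the perturbed Hankel matrix is invertible and the coefficients
of the perturbed Prony polynomial satisfy `|p_i - q_i| ≤ C₁ δ^{3-3n} ε`. -/
theorem prony_naive_coefficient_accuracy
    (n : ℕ) (hn : 2 ≤ n) (τ mA MA : ℝ) (hτ : 1 < τ) (hmA : 0 < mA) (hMA : mA ≤ MA) :
    ∃ c C₁ : ℝ, 0 < c ∧ 0 < C₁ ∧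
      ∀ (δ : ℝ) (x α : Fin n → ℂ),
        0 < δ → δ < 1 →
        (∀ j, ‖x j‖ = 1) →
        (∀ i j, i ≠ j →
          δ ≤ ‖x i - x j‖ ∧ ‖x i - x j‖ ≤ τ * δ) →
        (∀ j, mA ≤ ‖α j‖ ∧ ‖α j‖ ≤ MA) →
        ∀ (ε : ℝ) (mt : ℕ → ℂ),
          0 ≤ ε → ε ≤ c * δ ^ (3 * n - 3) →
          (∀ k, k < 2 * n → ‖mt k - ∑ j, α j * x j ^ k‖ ≤ ε) →
          IsUnit (Matrix.of fun i j : Fin n => mt ((i : ℕ) + (j : ℕ))).det ∧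
          ∀ q : Fin n → ℂ,
            ((Matrix.of fun i j : Fin n => mt ((i : ℕ) + (j : ℕ))) *ᵥ q =
              fun i : Fin n => -mt (n + (i : ℕ))) →
            ∀ i : Fin n,
              ‖
                  (∏ j, (Polynomial.X - Polynomial.C (x j))).coeff (i : ℕ) - q i‖ ≤
                C₁ * δ ^ (3 - 3 * (n : ℤ)) * ε :=
  prony_naive_coefficient_accuracy_general n hn τ mA MA hmA
end

section
/- Let n ≥ 2 and let x_1,…,x_n be points on the unit circle in ℂ forming a single cluster, i.e. δ ≤ |x_i − x_j| ≤ τδ for all i ≠ j, with 0 < δ < 1 and τ > 1, and let amplitudes α_1,…,α_n ∈ ℂ satisfy 𝔪 ≤ |α_j| ≤ 𝔐 for some 0 < 𝔪 ≤ 𝔐. Then for every K > 0 there exist constants c > 0 and C > 0 depending only on n, τ, 𝔪, 𝔐, K such that: if 0 < ε ≤ c δ^{3n−3}, if x̃_1,…,x̃_n ∈ ℂ are pairwise distinct with |x̃_j − x_j| ≤ K δ^{2−2n} ε for every j, and if m̃_0,…,m̃_{n−1} ∈ ℂ satisfy |m̃_i − m_i| ≤ ε for every i, then the Vandermonde matrix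 Ṽ with entries Ṽ_{k,j} = x̃_j^k (0 ≤ k ≤ n−1) is invertible and the unique solution α̃ = (α̃_1,…,α̃_n) of Ṽ α̃ = (m̃_0,…,m̃_{n−1})ᵀ satisfies |α̃_j − α_j| ≤ C δ^{3−3n} ε for every j. -/
/-!
The transposed Vandermonde matrix `Ṽ` at the perturbed nodes has as left inverse the matrix whose
rows are the coefficients of the Lagrange basis polynomials `ℓ_j = w_j ∏_{i ≠ j} (X - x̃_i)`.
Since `ε ≤ c δ^{3n-3}` moves each node by at most `δ/4`, the perturbed nodes lie in the disc of
radius `2` and stay `δ/2`-separated, so every entry of this inverse is at most `(6/δ)^{n-1}`.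
The residual `m̃ - Ṽ α` is `ε` plus the effect of moving the nodes, `O(δ^{2-2n} ε)`, and
`α̃ - α = Ṽ⁻¹ (m̃ - Ṽ α)` is therefore `O(δ^{1-n} δ^{2-2n} ε)`.
-/

open Matrix Polynomial Finset

section NormedCommRing

variable {R : Type*} [NormedCommRing R] [NormOneClass R]

theorem norm_pow_sub_pow_le {a b : R} {M : ℝ} (ha : ‖a‖ ≤ M) (hb : ‖b‖ ≤ M) (k : ℕ) :
    ‖a ^ k - b ^ k‖ ≤ k * M ^ (k - 1) * ‖a - b‖ := by
  have hM : 0 ≤ M := (norm_nonneg a).trans ha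
  rw [← geom_sum₂_mul]
  refine (norm_mul_le _ _).trans (mul_le_mul_of_nonneg_right ?_ (norm_nonneg _))
  calc ‖∑ i ∈ range k, a ^ i * b ^ (k - 1 - i)‖
      ≤ ∑ i ∈ range k, ‖a‖ ^ i * ‖b‖ ^ (k - 1 - i) :=
        norm_sum_le_of_le _ fun i _ =>
          (norm_mul_le _ _).trans (by gcongr <;> exact norm_pow_le _ _)
    _ ≤ ∑ _i ∈ range k, M ^ (k - 1) := by
        refine sum_le_sum fun i hi => ?_
        calc ‖a‖ ^ i * ‖b‖ ^ (k - 1 - i) ≤ M ^ i * M ^ (k - 1 - i) := by gcongr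
          _ = M ^ (k - 1) := by
            rw [← pow_add, Nat.add_sub_cancel' (Nat.le_sub_one_of_lt (mem_range.mp hi))]
    _ = k * M ^ (k - 1) := by simp

theorem norm_sum_mul_pow_sub_sum_pow_mul_le {ι : Type*} [Fintype ι] {x y α : ι → R}
    {M A η : ℝ} (hx : ∀ j, ‖x j‖ ≤ M) (hy : ∀ j, ‖y j‖ ≤ M) (hα : ∀ j, ‖α j‖ ≤ A)
    (hxy : ∀ j, ‖y j - x j‖ ≤ η) (k : ℕ) :
    ‖∑ j, α j * x j ^ k - ∑ j, y j ^ k * α j‖ ≤ Fintype.card ι * (A * (k * M ^ (k - 1) * η)) := by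
  rw [← sum_sub_distrib]
  calc ‖∑ j, (α j * x j ^ k - y j ^ k * α j)‖
      ≤ ∑ _j : ι, A * (k * M ^ (k - 1) * η) := by
        refine norm_sum_le_of_le _ fun j _ => ?_
        rw [mul_comm (y j ^ k), ← mul_sub]
        refine (norm_mul_le _ _).trans (mul_le_mul (hα j) ?_ (norm_nonneg _)
          ((norm_nonneg _).trans (hα j)))
        refine (norm_pow_sub_pow_le (hx j) (hy j) k).trans ?_
        rw [norm_sub_rev]
        have hM : 0 ≤ M := (norm_nonneg _).trans (hx j)
        gcongr
        exact hxy j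
    _ = Fintype.card ι * (A * (k * M ^ (k - 1) * η)) := by simp

end NormedCommRing

theorem Matrix.norm_sub_apply_le_of_mul_eq_one {ι R : Type*} [Fintype ι] [DecidableEq ι]
    [NormedRing R] {W V : Matrix ι ι R} (hWV : W * V = 1) {a b m : ι → R}
    (ha : V *ᵥ a = m) {w r : ℝ} (hW : ∀ j k, ‖W j k‖ ≤ w) (hr : ∀ k, ‖m k - (V *ᵥ b) k‖ ≤ r)
    (j : ι) : ‖a j - b j‖ ≤ Fintype.card ι * (w * r) := by
  have hab : a - b = W *ᵥ (m - V *ᵥ b) := by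
    rw [mulVec_sub, ← ha, mulVec_mulVec, mulVec_mulVec, hWV, one_mulVec, one_mulVec]
  rw [← Pi.sub_apply, hab]
  calc ‖∑ k, W j k * (m - V *ᵥ b) k‖ ≤ ∑ _k : ι, w * r :=
        norm_sum_le_of_le _ fun k _ => (norm_mul_le _ _).trans
          (mul_le_mul (hW j k) (hr k) (norm_nonneg _) ((norm_nonneg _).trans (hW j k)))
    _ = Fintype.card ι * (w * r) := by simp

namespace Lagrange

theorem norm_coeff_nodal_le {R ι : Type*} [NormedCommRing R] [NormOneClass R] [DecidableEq ι]
    {s : Finset ι} {v : ι → R} {B : ℝ} (hv : ∀ i ∈ s, ‖v i‖ ≤ B) (k : ℕ) :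
    ‖(nodal s v).coeff k‖ ≤ (1 + B) ^ #s := by
  induction s using Finset.induction_on generalizing k with
  | empty => by_cases hk : k = 0 <;> simp [hk, coeff_one]
  | insert a s ha ih =>
    have ih := ih fun i hi => hv i (mem_insert_of_mem hi)
    have hB : 0 ≤ B := (norm_nonneg _).trans (hv a (mem_insert_self a s))
    have hX : ‖(X * nodal s v).coeff k‖ ≤ (1 + B) ^ #s := by
      cases k with
      | zero => simpa using pow_nonneg (by linarith : (0 : ℝ) ≤ 1 + B) _
      | succ k => simpa [coeff_X_mul] using ih k
    rw [nodal_insert_eq_nodal ha, card_insert_of_notMem ha, sub_mul, coeff_sub, coeff_C_mul,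
      pow_succ]
    calc ‖(X * nodal s v).coeff k - v a * (nodal s v).coeff k‖
        ≤ (1 + B) ^ #s + B * (1 + B) ^ #s :=
          (norm_sub_le _ _).trans (add_le_add hX ((norm_mul_le _ _).trans
            (mul_le_mul (hv a (mem_insert_self a s)) (ih k) (norm_nonneg _) hB)))
      _ = (1 + B) ^ #s * (1 + B) := by ring

section NormedField

variable {𝕜 ι : Type*} [NormedField 𝕜] [DecidableEq ι]

theorem norm_nodalWeight_le {s : Finset ι} {v : ι → 𝕜} {i : ι} {d : ℝ} (hd : 0 < d)
    (hsep : ∀ j ∈ s.erase i, d ≤ ‖v i - v j‖) : ‖nodalWeight s v i‖ ≤ d⁻¹ ^ #(s.erase i) := by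
  rw [nodalWeight, norm_prod, ← prod_const]
  exact prod_le_prod (fun j _ => norm_nonneg _) fun j hj => by
    rw [norm_inv]; exact inv_anti₀ hd (hsep j hj)

theorem basis_eq_C_nodalWeight_mul_nodal_erase (s : Finset ι) (v : ι → 𝕜) (i : ι) :
    Lagrange.basis s v i = C (nodalWeight s v i) * nodal (s.erase i) v := by
  simp_rw [Lagrange.basis, basisDivisor, nodalWeight, prod_mul_distrib, map_prod, nodal]

theorem norm_coeff_basis_le {s : Finset ι} {v : ι → 𝕜} {i : ι} {B d : ℝ} (hd : 0 < d)
    (hv : ∀ j ∈ s, ‖v j‖ ≤ B) (hsep : ∀ j ∈ s.erase i, d ≤ ‖v i - v j‖) (k : ℕ) :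
    ‖(Lagrange.basis s v i).coeff k‖ ≤ ((1 + B) / d) ^ #(s.erase i) := by
  rw [basis_eq_C_nodalWeight_mul_nodal_erase, coeff_C_mul, norm_mul, div_eq_inv_mul, mul_pow]
  exact mul_le_mul (norm_nodalWeight_le hd hsep)
    (norm_coeff_nodal_le (fun j hj => hv j (mem_of_mem_erase hj)) k) (norm_nonneg _)
    (by positivity)

end NormedField

section Field

variable {F : Type*} [Field F] {n : ℕ}

noncomputable def basisCoeffMatrix (v : Fin n → F) : Matrix (Fin n) (Fin n) F :=
  of fun j k => (Lagrange.basis univ v j).coeff k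

theorem basisCoeffMatrix_mul_vandermonde_transpose {v : Fin n → F} (hv : Function.Injective v) :
    basisCoeffMatrix v * (vandermonde v)ᵀ = 1 := by
  have hvs : Set.InjOn v (univ : Finset (Fin n)) := hv.injOn
  ext j j'
  have hdeg : (Lagrange.basis univ v j).natDegree < n := by
    rw [natDegree_basis hvs (mem_univ j), card_univ, Fintype.card_fin]
    exact Nat.sub_one_lt_of_lt j.is_lt
  rw [mul_apply, one_apply]
  calc ∑ k, basisCoeffMatrix v j k * (vandermonde v)ᵀ k j'
      = (Lagrange.basis univ v j).eval (v j') := by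
        rw [eval_eq_sum_range' hdeg, ← Fin.sum_univ_eq_sum_range]
        rfl
    _ = if j = j' then 1 else 0 := by
        split_ifs with h
        · exact h ▸ eval_basis_self hvs (mem_univ j)
        · exact eval_basis_of_ne h (mem_univ j')

end Field

theorem norm_basisCoeffMatrix_apply_le {𝕜 : Type*} [NormedField 𝕜] {n : ℕ} {v : Fin n → 𝕜}
    {B d : ℝ} (hd : 0 < d) (hv : ∀ j, ‖v j‖ ≤ B) (hsep : ∀ i j, i ≠ j → d ≤ ‖v i - v j‖)
    (i k : Fin n) : ‖basisCoeffMatrix v i k‖ ≤ ((1 + B) / d) ^ (n - 1) := by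
  have h := norm_coeff_basis_le (s := univ) hd (fun j _ => hv j)
    (fun j hj => hsep i j (ne_of_mem_erase hj).symm) (k : ℕ)
  rwa [card_erase_of_mem (mem_univ i), card_univ, Fintype.card_fin] at h

end Lagrange

open Lagrange in
theorem norm_amplitude_sub_le {n : ℕ} {δ η ε A : ℝ} {x xt α mt at' : Fin n → ℂ} (hδ : 0 < δ)
    (hx : ∀ j, ‖x j‖ = 1) (hsep : ∀ i j, i ≠ j → δ ≤ ‖x i - x j‖) (hα : ∀ j, ‖α j‖ ≤ A)
    (hinj : Function.Injective xt) (hxt : ∀ j, ‖xt j - x j‖ ≤ η) (hηδ : η ≤ δ / 4)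
    (hη : η ≤ 1) (hmt : ∀ k : Fin n, ‖mt k - ∑ j, α j * x j ^ (k : ℕ)‖ ≤ ε)
    (hat : (vandermonde xt)ᵀ *ᵥ at' = mt) (j : Fin n) :
    ‖at' j - α j‖ ≤ n * ((6 / δ) ^ (n - 1) * (ε + n ^ 2 * A * 2 ^ (n - 1) * η)) := by
  have hx2 : ∀ j, ‖x j‖ ≤ 2 := fun j => by rw [hx j]; norm_num
  have hxt2 : ∀ j, ‖xt j‖ ≤ 2 := fun j => by
    linarith [norm_le_norm_add_norm_sub' (xt j) (x j), hx j, hxt j]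
  have hsep' : ∀ i j, i ≠ j → δ / 2 ≤ ‖xt i - xt j‖ := fun i j hij => by
    have := dist_triangle4 (x i) (xt i) (xt j) (x j)
    rw [dist_eq_norm, dist_eq_norm, dist_eq_norm, dist_eq_norm, norm_sub_rev (x i) (xt i)] at this
    linarith [hsep i j hij, hxt i, hxt j]
  have hW : ∀ i k, ‖basisCoeffMatrix xt i k‖ ≤ (6 / δ) ^ (n - 1) := fun i k => by
    convert norm_basisCoeffMatrix_apply_le (by positivity : 0 < δ / 2) hxt2 hsep' i k using 2
    ring
  have hr : ∀ k : Fin n,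
      ‖mt k - ((vandermonde xt)ᵀ *ᵥ α) k‖ ≤ ε + n ^ 2 * A * 2 ^ (n - 1) * η := fun k => by
    have hA : 0 ≤ A := (norm_nonneg _).trans (hα k)
    have hη0 : 0 ≤ η := (norm_nonneg _).trans (hxt k)
    have hmoment := norm_sum_mul_pow_sub_sum_pow_mul_le hx2 hxt2 hα hxt (k : ℕ)
    have hk : (k : ℝ) * 2 ^ ((k : ℕ) - 1) ≤ n * 2 ^ (n - 1) := by
      gcongr
      · exact_mod_cast k.is_lt.le
      · norm_num
      · omega
    calc ‖mt k - ((vandermonde xt)ᵀ *ᵥ α) k‖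
        ≤ ‖mt k - ∑ j, α j * x j ^ (k : ℕ)‖
          + ‖∑ j, α j * x j ^ (k : ℕ) - ((vandermonde xt)ᵀ *ᵥ α) k‖ :=
          norm_sub_le_norm_sub_add_norm_sub _ _ _
      _ ≤ ε + n * (A * (n * 2 ^ (n - 1) * η)) := by
        gcongr
        · exact hmt k
        · rw [Fintype.card_fin] at hmoment
          exact hmoment.trans (by gcongr ?_ * (_ * (?_ * _)))
      _ = ε + n ^ 2 * A * 2 ^ (n - 1) * η := by ring
  simpa using norm_sub_apply_le_of_mul_eq_one
    (basisCoeffMatrix_mul_vandermonde_transpose hinj) hat hW hr j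

theorem mul_zpow_mul_le_quarter {n : ℕ} (hn : 2 ≤ n) {K δ ε : ℝ} (hK : 0 < K) (hδ0 : 0 < δ)
    (hδ1 : δ ≤ 1) (hε : ε ≤ 1 / (4 * K) * δ ^ (3 * n - 3)) :
    K * δ ^ (2 - 2 * (n : ℤ)) * ε ≤ δ / 4 := by
  have hpow : δ ^ (2 - 2 * (n : ℤ)) * δ ^ (3 * n - 3) = δ ^ (n - 1) := by
    rw [← zpow_natCast, ← zpow_natCast, ← zpow_add₀ hδ0.ne']
    congr 1
    omega
  calc K * δ ^ (2 - 2 * (n : ℤ)) * ε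
      ≤ K * δ ^ (2 - 2 * (n : ℤ)) * (1 / (4 * K) * δ ^ (3 * n - 3)) := by gcongr
    _ = δ ^ (n - 1) / 4 := by rw [← hpow]; field_simp
    _ ≤ δ ^ 1 / 4 := by gcongr ?_ / _; exact pow_le_pow_of_le_one hδ0.le hδ1 (by omega)
    _ = δ / 4 := by rw [pow_one]

theorem amplitude_error_bound_le {n : ℕ} (hn : 1 ≤ n) {δ ε A K : ℝ} (hδ0 : 0 < δ) (hδ1 : δ ≤ 1)
    (hε : 0 ≤ ε) (hK : 0 ≤ K) :
    n * ((6 / δ) ^ (n - 1) * (ε + n ^ 2 * A * 2 ^ (n - 1) * (K * δ ^ (2 - 2 * (n : ℤ)) * ε)))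
      ≤ n * 6 ^ (n - 1) * (1 + n ^ 2 * |A| * 2 ^ (n - 1) * K) * δ ^ (3 - 3 * (n : ℤ)) * ε := by
  rw [show (2 - 2 * (n : ℤ)) = -((2 * (n - 1) : ℕ) : ℤ) by omega,
    show (3 - 3 * (n : ℤ)) = -((n - 1 + 2 * (n - 1) : ℕ) : ℤ) by omega,
    _root_.zpow_neg, _root_.zpow_neg, zpow_natCast, zpow_natCast, ← inv_pow, ← inv_pow, pow_add,
    div_eq_mul_inv, mul_pow]
  have hs : 1 ≤ δ⁻¹ ^ (2 * (n - 1)) := one_le_pow₀ ((one_le_inv₀ hδ0).mpr hδ1)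
  set s := δ⁻¹ ^ (2 * (n - 1))
  calc n * (6 ^ (n - 1) * δ⁻¹ ^ (n - 1) * (ε + n ^ 2 * A * 2 ^ (n - 1) * (K * s * ε)))
      = n * 6 ^ (n - 1) * δ⁻¹ ^ (n - 1) * (ε + n ^ 2 * A * 2 ^ (n - 1) * K * s * ε) := by ring
    _ ≤ n * 6 ^ (n - 1) * δ⁻¹ ^ (n - 1) * (s * ε + n ^ 2 * |A| * 2 ^ (n - 1) * K * s * ε) := by
        gcongr
        · exact le_mul_of_one_le_left hε hs
        · exact le_abs_self A
    _ = _ := by ring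

theorem prony_naive_amplitude_accuracy_general
    (n : ℕ) (hn : 2 ≤ n) (τ mA MA : ℝ)
    (K : ℝ) (hK : 0 < K) :
    ∃ c C₁ : ℝ, 0 < c ∧ 0 < C₁ ∧
      ∀ (δ : ℝ) (x α : Fin n → ℂ),
        0 < δ → δ < 1 →
        (∀ j, ‖x j‖ = 1) →
        (∀ i j, i ≠ j →
          δ ≤ ‖x i - x j‖ ∧ ‖x i - x j‖ ≤ τ * δ) →
        (∀ j, mA ≤ ‖α j‖ ∧ ‖α j‖ ≤ MA) →
        ∀ (ε : ℝ) (xt : Fin n → ℂ) (mt : Fin n → ℂ),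
          0 < ε → ε ≤ c * δ ^ (3 * n - 3) →
          Function.Injective xt →
          (∀ j, ‖xt j - x j‖ ≤ K * δ ^ (2 - 2 * (n : ℤ)) * ε) →
          (∀ i : Fin n,
            ‖mt i - ∑ j, α j * x j ^ (i : ℕ)‖ ≤ ε) →
          IsUnit (Matrix.of fun k j : Fin n => xt j ^ (k : ℕ)).det ∧
          ∀ at' : Fin n → ℂ,
            (Matrix.of fun k j : Fin n => xt j ^ (k : ℕ)) *ᵥ at' = mt →
            ∀ j : Fin n,
              ‖at' j - α j‖ ≤ C₁ * δ ^ (3 - 3 * (n : ℤ)) * ε := by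
  refine ⟨1 / (4 * K), n * 6 ^ (n - 1) * (1 + n ^ 2 * |MA| * 2 ^ (n - 1) * K), by positivity,
    by positivity, ?_⟩
  intro δ x α hδ0 hδ1 hx hsep hα ε xt mt hε0 hεc hinj hxt hmt
  have hη : K * δ ^ (2 - 2 * (n : ℤ)) * ε ≤ δ / 4 := mul_zpow_mul_le_quarter hn hK hδ0 hδ1.le hεc
  refine ⟨isUnit_det_of_left_inverse (Lagrange.basisCoeffMatrix_mul_vandermonde_transpose hinj),
    fun at' hat j => ?_⟩
  calc ‖at' j - α j‖
      ≤ n * ((6 / δ) ^ (n - 1) *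
          (ε + n ^ 2 * MA * 2 ^ (n - 1) * (K * δ ^ (2 - 2 * (n : ℤ)) * ε))) :=
        norm_amplitude_sub_le hδ0 hx (fun i j hij => (hsep i j hij).1) (fun j => (hα j).2) hinj
          hxt hη (by linarith) hmt hat j
    _ ≤ _ := amplitude_error_bound_le (by omega) hδ0 hδ1.le hε0.le hK.le

/-- Naive accuracy of amplitude recovery for a single cluster:
given approximate pairwise-distinct nodes `x̃_j` with `|x̃_j - x_j| ≤ K δ^{2-2n} ε` and
approximate first moments `m̃_i` with `|m̃_i - m_i| ≤ ε`, where `ε ≤ c δ^{3n-3}`, the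
Vandermonde matrix at the approximate nodes is invertible and the solution `α̃` of
`Ṽ α̃ = m̃` satisfies `|α̃_j - α_j| ≤ C₁ δ^{3-3n} ε`. -/
theorem prony_naive_amplitude_accuracy
    (n : ℕ) (hn : 2 ≤ n) (τ mA MA : ℝ) (hτ : 1 < τ) (hmA : 0 < mA) (hMA : mA ≤ MA)
    (K : ℝ) (hK : 0 < K) :
    ∃ c C₁ : ℝ, 0 < c ∧ 0 < C₁ ∧
      ∀ (δ : ℝ) (x α : Fin n → ℂ),
        0 < δ → δ < 1 →
        (∀ j, ‖x j‖ = 1) →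
        (∀ i j, i ≠ j →
          δ ≤ ‖x i - x j‖ ∧ ‖x i - x j‖ ≤ τ * δ) →
        (∀ j, mA ≤ ‖α j‖ ∧ ‖α j‖ ≤ MA) →
        ∀ (ε : ℝ) (xt : Fin n → ℂ) (mt : Fin n → ℂ),
          0 < ε → ε ≤ c * δ ^ (3 * n - 3) →
          Function.Injective xt →
          (∀ j, ‖xt j - x j‖ ≤ K * δ ^ (2 - 2 * (n : ℤ)) * ε) →
          (∀ i : Fin n,
            ‖mt i - ∑ j, α j * x j ^ (i : ℕ)‖ ≤ ε) →
          IsUnit (Matrix.of fun k j : Fin n => xt j ^ (k : ℕ)).det ∧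
          ∀ at' : Fin n → ℂ,
            (Matrix.of fun k j : Fin n => xt j ^ (k : ℕ)) *ᵥ at' = mt →
            ∀ j : Fin n,
              ‖at' j - α j‖ ≤ C₁ * δ ^ (3 - 3 * (n : ℤ)) * ε :=
  prony_naive_amplitude_accuracy_general n hn τ mA MA K hK
end

section
/- Let n ≥ 1, let x_1,…,x_n ∈ ℂ and α_1,…,α_n ∈ ℂ, and set m_k = ∑_{j=1}^n α_j x_j^k. Then for every z ∈ ℂ, the homogeneous Prony polynomial p̄(z) satisfies p̄(z) = (−1)^n · (∏_{k=1}^n α_k) · (∏_{1 ≤ m < ℓ ≤ n} (x_ℓ − x_m)²) · (∏_{m=1}^n (z − x_m)). -/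
/-!
Row `i + 1` of the Prony matrix is `∑ⱼ αⱼ xⱼ^i` times row `j + 1` of the Vandermonde matrix
`V(z, x₁, …, xₙ)`, while row `0` is row `0` of it. Hence the Prony matrix factors as `A · V(z, x)`
with `det A = (∏ αⱼ) · det V(x)`, and `det V(z, x) = ∏ⱼ (xⱼ - z) · det V(x)`; the squared
Vandermonde determinant gives the discriminant factor.
-/

open Matrix Finset

variable {R : Type*} [CommRing R] {n : ℕ}

theorem det_vandermonde_cons (z : R) (x : Fin n → R) :
    (vandermonde (Fin.cons z x)).det = (∏ i, (x i - z)) * (vandermonde x).det := by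
  simp only [det_vandermonde, Fin.prod_univ_succ, Fin.prod_Ioi_zero, Fin.prod_Ioi_succ,
    Fin.cons_zero, Fin.cons_succ]

theorem det_vandermonde_sq (x : Fin n → R) :
    (vandermonde x).det ^ 2 =
      ∏ p ∈ univ.filter (fun p : Fin n × Fin n => p.1 < p.2), (x p.2 - x p.1) ^ 2 := by
  rw [det_vandermonde, ← prod_pow, prod_filter, ← univ_product_univ, prod_product]
  refine prod_congr rfl fun i _ => ?_
  rw [← prod_pow, ← filter_lt_eq_Ioi, prod_filter]

def pronyMatrix (α x : Fin n → R) (z : R) : Matrix (Fin (n + 1)) (Fin (n + 1)) R :=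
  of fun i k => if (i : ℕ) = 0 then z ^ (k : ℕ) else ∑ j, α j * x j ^ ((i : ℕ) - 1 + (k : ℕ))

def pronyCoeffMatrix (α x : Fin n → R) : Matrix (Fin (n + 1)) (Fin (n + 1)) R :=
  of <| Fin.cons (Pi.single 0 1) fun i => Fin.cons 0 fun j => α j * x j ^ (i : ℕ)

theorem pronyMatrix_eq_mul_vandermonde (α x : Fin n → R) (z : R) :
    pronyMatrix α x z = pronyCoeffMatrix α x * vandermonde (Fin.cons z x) := by
  ext i k
  refine Fin.cases ?_ (fun i => ?_) i
  all_goals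
    rw [mul_apply, Fin.sum_univ_succ]
    simp [pronyMatrix, pronyCoeffMatrix, vandermonde_apply, -vandermonde_cons, pow_add, mul_assoc]

theorem det_pronyCoeffMatrix (α x : Fin n → R) :
    (pronyCoeffMatrix α x).det = (∏ j, α j) * (vandermonde x).det := by
  rw [det_succ_row_zero, Fin.sum_univ_succ]
  have hminor : (pronyCoeffMatrix α x).submatrix Fin.succ (Fin.succAbove 0) =
      of fun i j => α j * (vandermonde x)ᵀ i j := by
    ext i j; simp [pronyCoeffMatrix]
  simp only [hminor, det_mul_row, det_transpose]
  simp [pronyCoeffMatrix]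

theorem det_pronyMatrix (α x : Fin n → R) (z : R) :
    (pronyMatrix α x z).det =
      (-1) ^ n * (∏ k, α k) *
        (∏ p ∈ univ.filter (fun p : Fin n × Fin n => p.1 < p.2), (x p.2 - x p.1) ^ 2) *
        ∏ m, (z - x m) := by
  have hsign : ∏ m, (x m - z) = (-1) ^ n * ∏ m, (z - x m) := by
    simp_rw [← neg_sub z, prod_neg, card_univ, Fintype.card_fin]
  rw [pronyMatrix_eq_mul_vandermonde, det_mul, det_pronyCoeffMatrix, det_vandermonde_cons, hsign,
    ← det_vandermonde_sq]
  ring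

theorem homogeneous_prony_polynomial_formula_general
    (n : ℕ) (x α : Fin n → ℂ) (z : ℂ) :
    (Matrix.det (Matrix.of fun i k : Fin (n + 1) =>
        if (i : ℕ) = 0 then z ^ (k : ℕ)
        else ∑ j, α j * x j ^ ((i : ℕ) - 1 + (k : ℕ)))) =
      (-1) ^ n * (∏ k, α k) *
        (∏ p ∈ Finset.univ.filter (fun p : Fin n × Fin n => p.1 < p.2),
          (x p.2 - x p.1) ^ 2) *
        ∏ m, (z - x m) :=
  det_pronyMatrix α x z

/-- Explicit formula for the homogeneous Prony polynomial:
`p̄(z) = (-1)^n (∏_k α_k) (∏_{m<ℓ} (x_ℓ - x_m)²) (∏_m (z - x_m))`. -/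
theorem homogeneous_prony_polynomial_formula
    (n : ℕ) (hn : 1 ≤ n) (x α : Fin n → ℂ) (z : ℂ) :
    (Matrix.det (Matrix.of fun i k : Fin (n + 1) =>
        if (i : ℕ) = 0 then z ^ (k : ℕ)
        else ∑ j, α j * x j ^ ((i : ℕ) - 1 + (k : ℕ)))) =
      (-1) ^ n * (∏ k, α k) *
        (∏ p ∈ Finset.univ.filter (fun p : Fin n × Fin n => p.1 < p.2),
          (x p.2 - x p.1) ^ 2) *
        ∏ m, (z - x m) :=
  homogeneous_prony_polynomial_formula_general n x α z
end

section
/- Fix integers n ≥ 2, ζ ≥ 1 and cluster sizes ℓ_1,…,ℓ_ζ ≥ 1 with ℓ_1+…+ℓ_ζ = n and ℓ* = max_s ℓ_s, and fix τ > 1, η > 1, T > 0. Then there exists a constant C > 0, depending only on these fixed parameters and not on δ, such that the following holds. Let x_1,…,x_n on the unit circle form an (n,ζ,δ,τ,η,T)-clustered configuration with clusters C_1,…,C_ζ of sizes ℓ_1,…,ℓ_ζ (0 < δ < 1, τδ < T); fix j* ∈ C_μ and z ∈ ℂ with |z − x_{j*}| = ρ*, where ρ* = ρ̄* δ^{2(ℓ*−ℓ_μ)+1}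 and 0 < ρ̄* < (1/3)·min(1, ηT); let 0 < ε̄ < 1 and ε = ε̄ δ^{2ℓ*−1}; set ϱ = n(n−1)/2 − ∑_s ℓ_s(ℓ_s−1)/2 and N = n(n−1)+2ℓ*−ℓ_μ−2ϱ. For a strictly increasing tuple ω = (ω_1 < … < ω_{n−1}) of n−1 indices from {1,…,n}, omitting exactly one index i₀, set P_ω = (∏_{s=1}^{n−1} |x_{ω_s} − z|)·(∏_{1 ≤ s < t ≤ n−1} |x_{ω_t} − x_{ω_s}|²). Then: (i) if i₀ = j*, then ε·P_ω ≤ C ε̄ δ^N; (ii) if i₀ ∈ C_μ and i₀ ≠ j*, then ε·P_ω ≤ C ε̄ ρ̄* δ^{N+2(ℓ*−ℓ_μ)}; (iii) if i₀ ∈ C_ι with ι ≠ μ, then ε·P_ω ≤ C ε̄ ρ̄* δ^{N+2(ℓ*−ℓ_ι)+1}. -/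
/-!
Every factor of `P_ω` is a distance bounded by a constant, and by a constant times `δ` when both
points lie in one cluster; for the factors `|x_m - z|` this holds because `z` is within
`ρ̄* δ ≤ δ` of `x_{j*}`, while `|x_{j*} - z|` itself is exactly `ρ̄* δ^(2(ℓ* - ℓ_μ) + 1)`. Hence
`ε P_ω ≤ C ε̄ (ρ̄*) δ^E`, where `E` counts the same-cluster factors. Among the `n - 1` points
other than `x_{i₀}`, with `i₀ ∈ C_ι`, there are `∑_s (ℓ_s choose 2) - (ℓ_ι - 1)` same-cluster
pairs, and `N = 2 ∑_s (ℓ_s choose 2) + 2ℓ* - ℓ_μ`; in each of the three cases this makes `E`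
exactly the claimed exponent.
-/

open Finset

namespace Finset

variable {α κ : Type*}

lemma card_offDiag_filter_lt [LinearOrder α] (s : Finset α) :
    #{p ∈ s.offDiag | p.1 < p.2} = (#s).choose 2 := by
  rw [← card_product_filter_lt]
  congr 1
  ext p
  simp only [mem_filter, mem_offDiag, mem_product]
  grind

lemma card_offDiag_filter_lt_filter_eq [LinearOrder α] [Fintype κ] [DecidableEq κ]
    (s : Finset α) (cl : α → κ) :
    #{p ∈ {p ∈ s.offDiag | p.1 < p.2} | cl p.1 = cl p.2} = ∑ k, (#{a ∈ s | cl a = k}).choose 2 := by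
  rw [card_eq_sum_card_fiberwise (f := fun p => cl p.1) (t := univ) (fun _ _ => mem_univ _)]
  refine sum_congr rfl fun k _ => ?_
  rw [← card_offDiag_filter_lt]
  congr 1
  ext p
  simp only [mem_filter, mem_offDiag]
  grind

lemma sum_choose_two_card_filter_erase [DecidableEq α] [Fintype κ] [DecidableEq κ]
    {s : Finset α} (cl : α → κ) {a : α} (ha : a ∈ s) :
    ∑ k, (#{b ∈ s.erase a | cl b = k}).choose 2 + #{b ∈ s | cl b = cl a} =
      ∑ k, (#{b ∈ s | cl b = k}).choose 2 + 1 := by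
  rw [← add_sum_erase _ _ (mem_univ (cl a)), ← add_sum_erase _ _ (mem_univ (cl a))]
  have hsame : #{b ∈ s.erase a | cl b = cl a} + 1 = #{b ∈ s | cl b = cl a} := by
    rw [filter_erase]
    exact card_erase_add_one (mem_filter.2 ⟨ha, rfl⟩)
  have hother : ∀ k ∈ univ.erase (cl a), #{b ∈ s.erase a | cl b = k} = #{b ∈ s | cl b = k} := by
    intro k hk
    rw [filter_erase, erase_eq_of_notMem]
    simp only [mem_filter, not_and]
    exact fun _ h => (ne_of_mem_erase hk) h.symm
  rw [sum_congr rfl fun k hk => congrArg (·.choose 2) (hother k hk), ← hsame,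
    Nat.choose_succ_succ', Nat.choose_one_right]
  ring

lemma prod_le_pow_card_mul_pow_card_filter {ι R : Type*} [CommSemiring R] [PartialOrder R]
    [IsOrderedRing R] (s : Finset ι) (p : ι → Prop) [DecidablePred p] {f : ι → R} {M δ : R}
    (hf0 : ∀ i ∈ s, 0 ≤ f i) (hf : ∀ i ∈ s, f i ≤ if p i then M * δ else M) :
    ∏ i ∈ s, f i ≤ M ^ #s * δ ^ #{i ∈ s | p i} := by
  refine (prod_le_prod hf0 hf).trans_eq ?_
  rw [prod_ite, prod_const, prod_const, mul_pow, ← card_filter_add_card_filter_not p (s := s),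
    pow_add]
  ring

end Finset

lemma Int.natCast_mul_sub_one_eq_two_mul_choose (k : ℕ) : (k : ℤ) * (k - 1) = 2 * k.choose 2 := by
  have h : ((k * (k - 1) : ℤ) : ℚ) = ((2 * k.choose 2 : ℤ) : ℚ) := by
    push_cast
    rw [Nat.cast_choose_two]
    ring
  exact_mod_cast h

lemma Int.natCast_mul_sub_one_ediv_two (k : ℕ) : (k : ℤ) * (k - 1) / 2 = k.choose 2 := by
  rw [Int.natCast_mul_sub_one_eq_two_mul_choose, Int.mul_ediv_cancel_left _ two_ne_zero]

lemma two_mul_eq_of_eq_sub_sum_ediv_two {ι : Type*} [Fintype ι] {n : ℕ} {ℓ : ι → ℕ} {ϱ : ℤ}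
    (hϱ : ϱ = (n : ℤ) * ((n : ℤ) - 1) / 2 - ∑ s, (ℓ s : ℤ) * ((ℓ s : ℤ) - 1) / 2) :
    2 * ϱ = (n : ℤ) * ((n : ℤ) - 1) - 2 * ((∑ s, (ℓ s).choose 2 : ℕ) : ℤ) := by
  simp_rw [hϱ, Int.natCast_mul_sub_one_ediv_two, Int.natCast_mul_sub_one_eq_two_mul_choose]
  push_cast
  ring

section Clustered

variable {α κ E : Type*} [SeminormedAddCommGroup E] [DecidableEq κ] {x : α → E} {cl : α → κ}
  {τ δ M : ℝ}

lemma norm_sub_le_ite_of_norm_eq_one (hx : ∀ j, ‖x j‖ = 1)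
    (hsame : ∀ i j, i ≠ j → cl i = cl j → ‖x i - x j‖ ≤ τ * δ) (hδ : 0 ≤ δ) (hτM : τ ≤ M)
    (hM : 2 ≤ M) : ∀ i j, i ≠ j → ‖x i - x j‖ ≤ if cl i = cl j then M * δ else M := by
  intro i j hij
  split_ifs with hc
  · exact (hsame i j hij hc).trans (mul_le_mul_of_nonneg_right hτM hδ)
  · calc ‖x i - x j‖ ≤ ‖x i‖ + ‖x j‖ := norm_sub_le _ _
      _ ≤ M := by rw [hx, hx]; linarith

lemma norm_sub_le_ite_of_norm_sub_le (hx : ∀ j, ‖x j‖ = 1)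
    (hsame : ∀ i j, i ≠ j → cl i = cl j → ‖x i - x j‖ ≤ τ * δ) (hδ : δ ≤ 1) {z : E} {j : α}
    (hz : ‖z - x j‖ ≤ δ) (hτM : τ + 1 ≤ M) (hM : 3 ≤ M) :
    ∀ i, i ≠ j → ‖x i - z‖ ≤ if cl i = cl j then M * δ else M := by
  intro i hij
  have hδ0 : 0 ≤ δ := (norm_nonneg _).trans hz
  have htri : ‖x i - z‖ ≤ ‖x i - x j‖ + δ :=
    (norm_sub_le_norm_sub_add_norm_sub _ (x j) _).trans (by rw [norm_sub_rev (x j)]; linarith)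
  -- the pair bound with `M - 1` leaves room for the extra `δ` coming from `z`
  have hpair := norm_sub_le_ite_of_norm_eq_one hx hsame hδ0 (by linarith : τ ≤ M - 1)
    (by linarith : 2 ≤ M - 1) i j hij
  split_ifs at hpair ⊢ <;> nlinarith

lemma prod_norm_sub_sq_le [LinearOrder α] (s : Finset α)
    (hpair : ∀ i j, i ≠ j → ‖x i - x j‖ ≤ if cl i = cl j then M * δ else M) :
    ∏ p ∈ {p ∈ s.offDiag | p.1 < p.2}, ‖x p.2 - x p.1‖ ^ 2 ≤
      (M ^ #{p ∈ s.offDiag | p.1 < p.2} *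
        δ ^ #{p ∈ {p ∈ s.offDiag | p.1 < p.2} | cl p.1 = cl p.2}) ^ 2 := by
  rw [prod_pow]
  refine pow_le_pow_left₀ (prod_nonneg fun _ _ => norm_nonneg _)
    (prod_le_pow_card_mul_pow_card_filter _ _ (fun _ _ => norm_nonneg _) fun p hp => ?_) 2
  rw [norm_sub_rev]
  exact hpair _ _ (mem_offDiag.1 (mem_filter.1 hp).1).2.2

lemma exists_prod_norm_sub_sq_erase_le [LinearOrder α] [Fintype κ] {s : Finset α} {ℓ : κ → ℕ}
    (hs : ∀ k, #{j ∈ s | cl j = k} = ℓ k)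
    (hpair : ∀ i j, i ≠ j → ‖x i - x j‖ ≤ if cl i = cl j then M * δ else M) {a : α} (ha : a ∈ s) :
    ∃ b, b + ℓ (cl a) = ∑ k, (ℓ k).choose 2 + 1 ∧
      ∏ p ∈ {p ∈ (s.erase a).offDiag | p.1 < p.2}, ‖x p.2 - x p.1‖ ^ 2 ≤
        (M ^ (#s - 1).choose 2 * δ ^ b) ^ 2 := by
  have hD : #{p ∈ (s.erase a).offDiag | p.1 < p.2} = (#s - 1).choose 2 := by
    rw [card_offDiag_filter_lt, card_erase_of_mem ha]
  refine ⟨_, ?_, hD ▸ prod_norm_sub_sq_le _ hpair⟩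
  simp_rw [← hs]
  rw [card_offDiag_filter_lt_filter_eq, sum_choose_two_card_filter_erase cl ha]

variable {z : E} {j : α}

lemma prod_norm_sub_le_of_notMem {s : Finset α} (hj : j ∉ s)
    (hfac : ∀ i, i ≠ j → ‖x i - z‖ ≤ if cl i = cl j then M * δ else M) :
    ∏ i ∈ s, ‖x i - z‖ ≤ M ^ #s * δ ^ #{i ∈ s | cl i = cl j} :=
  prod_le_pow_card_mul_pow_card_filter _ _ (fun _ _ => norm_nonneg _)
    fun i hi => hfac i (ne_of_mem_of_not_mem hi hj)

lemma prod_norm_sub_le_of_mem [DecidableEq α] {s : Finset α} (hj : j ∈ s) (hM : 1 ≤ M)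
    (hδ : 0 ≤ δ) {r : ℝ} {e : ℕ} (hzj : ‖z - x j‖ = r * δ ^ e)
    (hfac : ∀ i, i ≠ j → ‖x i - z‖ ≤ if cl i = cl j then M * δ else M) :
    ∏ i ∈ s, ‖x i - z‖ ≤ M ^ #s * r * δ ^ (e + #{i ∈ s.erase j | cl i = cl j}) := by
  rw [← mul_prod_erase _ _ hj, norm_sub_rev, hzj]
  have hr : 0 ≤ r * δ ^ e := hzj ▸ norm_nonneg _
  calc r * δ ^ e * ∏ i ∈ s.erase j, ‖x i - z‖
      ≤ r * δ ^ e * (M ^ #(s.erase j) * δ ^ #{i ∈ s.erase j | cl i = cl j}) :=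
        mul_le_mul_of_nonneg_left (prod_norm_sub_le_of_notMem (notMem_erase j s) hfac) hr
    _ ≤ r * δ ^ e * (M ^ #s * δ ^ #{i ∈ s.erase j | cl i = cl j}) := by
        gcongr r * δ ^ e * (?_ * _)
        exact pow_le_pow_right₀ hM card_erase_le
    _ = _ := by ring

end Clustered

lemma mul_mul_le_pow_mul_mul {M δ c R Z Q : ℝ} {e a b k₁ k₂ B : ℕ} {t : ℤ} (hM : 1 ≤ M)
    (hδ : 0 ≤ δ) (hc : 0 ≤ c) (hR : 0 ≤ R) (hZ : Z ≤ M ^ k₁ * R * δ ^ a) (hQ0 : 0 ≤ Q)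
    (hQ : Q ≤ (M ^ k₂ * δ ^ b) ^ 2) (hk : k₁ + 2 * k₂ ≤ B) (ht : ((e + a + 2 * b : ℕ) : ℤ) = t) :
    c * δ ^ e * (Z * Q) ≤ M ^ B * c * R * δ ^ t := by
  have hM0 : 0 ≤ M := zero_le_one.trans hM
  calc c * δ ^ e * (Z * Q) ≤ c * δ ^ e * ((M ^ k₁ * R * δ ^ a) * (M ^ k₂ * δ ^ b) ^ 2) := by
        gcongr
    _ = M ^ (k₁ + 2 * k₂) * c * R * δ ^ (e + a + 2 * b) := by ring
    _ ≤ M ^ B * c * R * δ ^ (e + a + 2 * b) := by gcongr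
    _ = M ^ B * c * R * δ ^ t := by rw [← ht, zpow_natCast]

theorem prony_P_estimates_general
    (n ζ : ℕ)
    (ℓ : Fin ζ → ℕ)
    (lstar : ℕ) (hlstar : lstar = Finset.univ.sup ℓ)
    (τ η T : ℝ) (hτ : 1 < τ) :
    ∃ C₁ : ℝ, 0 < C₁ ∧
      ∀ (δ : ℝ) (x : Fin n → ℂ) (cl : Fin n → Fin ζ),
        0 < δ → δ < 1 → τ * δ < T →
        (∀ j, ‖x j‖ = 1) →
        Function.Injective x →
        (∀ i j, i ≠ j → cl i = cl j →
          δ ≤ ‖x i - x j‖ ∧ ‖x i - x j‖ ≤ τ * δ) →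
        (∀ i j, cl i ≠ cl j →
          T ≤ ‖x i - x j‖ ∧ ‖x i - x j‖ ≤ η * T) →
        (∀ s, (Finset.univ.filter fun j => cl j = s).card = ℓ s) →
        ∀ (jstar : Fin n) (ρbar εbar : ℝ) (z : ℂ) (ϱ N : ℤ),
          0 < ρbar → ρbar < (1 / 3) * min 1 (η * T) →
          0 < εbar → εbar < 1 →
          ‖z - x jstar‖ =
            ρbar * δ ^ (2 * (lstar - ℓ (cl jstar)) + 1) →
          ϱ = (n : ℤ) * ((n : ℤ) - 1) / 2 - ∑ s, (ℓ s : ℤ) * ((ℓ s : ℤ) - 1) / 2 →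
          N = (n : ℤ) * ((n : ℤ) - 1) + 2 * (lstar : ℤ) - (ℓ (cl jstar) : ℤ) - 2 * ϱ →
          ∀ i₀ : Fin n,
            ((i₀ = jstar →
              (εbar * δ ^ (2 * lstar - 1)) *
                ((∏ m ∈ Finset.univ.erase i₀, ‖x m - z‖) *
                  ∏ p ∈ (Finset.univ.erase i₀).offDiag.filter (fun p => p.1 < p.2),
                    ‖x p.2 - x p.1‖ ^ 2) ≤
                C₁ * εbar * δ ^ N) ∧
            (cl i₀ = cl jstar → i₀ ≠ jstar →
              (εbar * δ ^ (2 * lstar - 1)) *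
                ((∏ m ∈ Finset.univ.erase i₀, ‖x m - z‖) *
                  ∏ p ∈ (Finset.univ.erase i₀).offDiag.filter (fun p => p.1 < p.2),
                    ‖x p.2 - x p.1‖ ^ 2) ≤
                C₁ * εbar * ρbar *
                  δ ^ (N + 2 * ((lstar : ℤ) - (ℓ (cl jstar) : ℤ)))) ∧
            (cl i₀ ≠ cl jstar →
              (εbar * δ ^ (2 * lstar - 1)) *
                ((∏ m ∈ Finset.univ.erase i₀, ‖x m - z‖) *
                  ∏ p ∈ (Finset.univ.erase i₀).offDiag.filter (fun p => p.1 < p.2),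
                    ‖x p.2 - x p.1‖ ^ 2) ≤
                C₁ * εbar * ρbar *
                  δ ^ (N + 2 * ((lstar : ℤ) - (ℓ (cl i₀) : ℤ)) + 1))) := by
  have hM : 1 ≤ τ + 3 := by linarith
  refine ⟨(τ + 3) ^ (n - 1 + 2 * (n - 1).choose 2), by positivity, ?_⟩
  intro δ x cl hδ0 hδ1 _ hx _ hclose _ hcard jstar ρbar εbar z ϱ N hρ0 hρ hε0 _ hz hϱ hN i₀
  have hsame i j hij hc : ‖x i - x j‖ ≤ τ * δ := (hclose i j hij hc).2
  have hℓμ : ℓ (cl jstar) ≤ lstar := hlstar ▸ le_sup (mem_univ _)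
  have h2ϱ := two_mul_eq_of_eq_sub_sum_ediv_two hϱ
  have hzδ : ‖z - x jstar‖ ≤ δ := hz ▸ (mul_le_of_le_one_left (by positivity)
    (by linarith [min_le_left 1 (η * T)])).trans (pow_le_of_le_one hδ0.le hδ1.le (by simp))
  have hfac := norm_sub_le_ite_of_norm_sub_le (M := τ + 3) hx hsame hδ1.le hzδ (by linarith)
    (by linarith)
  obtain ⟨b, hb, hpairs⟩ := exists_prod_norm_sub_sq_erase_le hcard
    (norm_sub_le_ite_of_norm_eq_one (M := τ + 3) hx hsame hδ0.le (by linarith) (by linarith))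
    (mem_univ i₀)
  refine ⟨?_, ?_, ?_⟩
  · rintro rfl
    have hZ := prod_norm_sub_le_of_notMem (notMem_erase i₀ univ) hfac
    have hcount : #{m ∈ univ.erase i₀ | cl m = cl i₀} + 1 = ℓ (cl i₀) := by
      rw [filter_erase, card_erase_add_one (by simp), hcard]
    rw [← mul_one ((τ + 3) ^ _)] at hZ
    simpa only [mul_one] using mul_mul_le_pow_mul_mul hM hδ0.le hε0.le zero_le_one hZ
      (prod_nonneg fun _ _ => by positivity) hpairs (by simp) (by omega)
  · intro hι hne
    have hZ := prod_norm_sub_le_of_mem (mem_erase.2 ⟨hne.symm, mem_univ _⟩) hM hδ0.le hz hfac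
    have hcount : #{m ∈ (univ.erase i₀).erase jstar | cl m = cl jstar} + 1 + 1 = ℓ (cl jstar) := by
      rw [filter_erase, filter_erase, card_erase_add_one (by simp [hne.symm]),
        card_erase_add_one (by simp [hι]), hcard]
    rw [hι] at hb
    exact mul_mul_le_pow_mul_mul hM hδ0.le hε0.le hρ0.le hZ
      (prod_nonneg fun _ _ => by positivity) hpairs (by simp) (by omega)
  · intro hι
    have hne : jstar ≠ i₀ := fun h => hι (h ▸ rfl)
    have hZ := prod_norm_sub_le_of_mem (mem_erase.2 ⟨hne, mem_univ _⟩) hM hδ0.le hz hfac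
    have hcount : #{m ∈ (univ.erase i₀).erase jstar | cl m = cl jstar} + 1 = ℓ (cl jstar) := by
      rw [filter_erase, filter_erase, erase_eq_of_notMem (a := i₀) (by simpa using hι),
        card_erase_add_one (by simp), hcard]
    exact mul_mul_le_pow_mul_mul hM hδ0.le hε0.le hρ0.le hZ
      (prod_nonneg fun _ _ => by positivity) hpairs (by simp) (by omega)

/-- Lemma 5.4: bounds on `ε·P_ω` for strictly increasing tuples of length `n-1` (identified
with the set `{1,…,n} \ {i₀}`), in the three cases determined by the cluster position of the
omitted index `i₀`. -/
theorem prony_P_estimates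
    (n ζ : ℕ) (hn : 2 ≤ n) (hζ : 1 ≤ ζ)
    (ℓ : Fin ζ → ℕ) (hℓ : ∀ s, 1 ≤ ℓ s) (hsum : ∑ s, ℓ s = n)
    (lstar : ℕ) (hlstar : lstar = Finset.univ.sup ℓ)
    (τ η T : ℝ) (hτ : 1 < τ) (hη : 1 < η) (hT : 0 < T) :
    ∃ C₁ : ℝ, 0 < C₁ ∧
      ∀ (δ : ℝ) (x : Fin n → ℂ) (cl : Fin n → Fin ζ),
        0 < δ → δ < 1 → τ * δ < T →
        (∀ j, ‖x j‖ = 1) →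
        Function.Injective x →
        (∀ i j, i ≠ j → cl i = cl j →
          δ ≤ ‖x i - x j‖ ∧ ‖x i - x j‖ ≤ τ * δ) →
        (∀ i j, cl i ≠ cl j →
          T ≤ ‖x i - x j‖ ∧ ‖x i - x j‖ ≤ η * T) →
        (∀ s, (Finset.univ.filter fun j => cl j = s).card = ℓ s) →
        ∀ (jstar : Fin n) (ρbar εbar : ℝ) (z : ℂ) (ϱ N : ℤ),
          0 < ρbar → ρbar < (1 / 3) * min 1 (η * T) →
          0 < εbar → εbar < 1 →
          ‖z - x jstar‖ =
            ρbar * δ ^ (2 * (lstar - ℓ (cl jstar)) + 1) →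
          ϱ = (n : ℤ) * ((n : ℤ) - 1) / 2 - ∑ s, (ℓ s : ℤ) * ((ℓ s : ℤ) - 1) / 2 →
          N = (n : ℤ) * ((n : ℤ) - 1) + 2 * (lstar : ℤ) - (ℓ (cl jstar) : ℤ) - 2 * ϱ →
          ∀ i₀ : Fin n,
            ((i₀ = jstar →
              (εbar * δ ^ (2 * lstar - 1)) *
                ((∏ m ∈ Finset.univ.erase i₀, ‖x m - z‖) *
                  ∏ p ∈ (Finset.univ.erase i₀).offDiag.filter (fun p => p.1 < p.2),
                    ‖x p.2 - x p.1‖ ^ 2) ≤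
                C₁ * εbar * δ ^ N) ∧
            (cl i₀ = cl jstar → i₀ ≠ jstar →
              (εbar * δ ^ (2 * lstar - 1)) *
                ((∏ m ∈ Finset.univ.erase i₀, ‖x m - z‖) *
                  ∏ p ∈ (Finset.univ.erase i₀).offDiag.filter (fun p => p.1 < p.2),
                    ‖x p.2 - x p.1‖ ^ 2) ≤
                C₁ * εbar * ρbar *
                  δ ^ (N + 2 * ((lstar : ℤ) - (ℓ (cl jstar) : ℤ)))) ∧
            (cl i₀ ≠ cl jstar →
              (εbar * δ ^ (2 * lstar - 1)) *
                ((∏ m ∈ Finset.univ.erase i₀, ‖x m - z‖) *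
                  ∏ p ∈ (Finset.univ.erase i₀).offDiag.filter (fun p => p.1 < p.2),
                    ‖x p.2 - x p.1‖ ^ 2) ≤
                C₁ * εbar * ρbar *
                  δ ^ (N + 2 * ((lstar : ℤ) - (ℓ (cl i₀) : ℤ)) + 1))) :=
  prony_P_estimates_general n ζ ℓ lstar hlstar τ η T hτ
end

section
/- Fix integers n ≥ 2, ζ ≥ 1 and cluster sizes ℓ_1,…,ℓ_ζ ≥ 1 with ℓ_1+…+ℓ_ζ = n and ℓ* = max_s ℓ_s, and fix τ > 1, η > 1, T > 0. Then there exists C > 0, depending only on these fixed parameters and not on δ, such that the following holds. Let x_1,…,x_n on the unit circle form an (n,ζ,δ,τ,η,T)-clustered configuration with clusters of sizes ℓ_1,…,ℓ_ζ (0 < δ < 1, τδ < T), and let x̃_1,…,x̃_n ∈ ℂ satisfy |x̃_j − x_j| ≤ ρ̄ δ^{2(ℓ*−ℓ_{(j)})+1} for every j, where ℓ_{(j)} is the size of the cluster containing j and 0 < ρ̄ < (1/3)·min(1, ηT). Then the x̃_j are pairwise distinct, the Vandermonde matrix Ṽ with entries Ṽ_{k,j} = x̃_j^k (0 ≤ k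 ≤ n−1) is invertible, and for every j ∈ {1,…,n} and every vector b ∈ ℂ^n: |(Ṽ^{−1} b)_j| ≤ C δ^{1−ℓ_{(j)}} · max_{0 ≤ i ≤ n−1} |b_i|. -/
/-!
The perturbed nodes stay within `δ / 3` of the original ones, so they are still `δ / 3`-separated
inside a cluster and `T / 3`-separated across clusters. The rows of the inverse of the transposed
Vandermonde matrix are the coefficient vectors of the Lagrange basis polynomials
`L_j = ∏_{m ≠ j} (X - x̃_m) / (x̃_j - x̃_m)`, and the coefficients of `∏ (X - x̃_m)` have
`ℓ¹`-norm at most `∏ (1 + |x̃_m|)`. Hence row `j` has `ℓ¹`-norm at most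
`∏_{m ≠ j} (1 + |x̃_m|) / |x̃_j - x̃_m|`, where only the `ℓ_{(j)} - 1` factors coming from the
cluster of `j` are of size `1 / δ`.
-/

open Matrix

open Polynomial Finset

theorem Polynomial.sum_range_norm_coeff_mul_X_sub_C_le {R : Type*} [SeminormedCommRing R]
    {p : R[X]} {N : ℕ} (hp : p.natDegree ≤ N) (r : R) :
    ∑ k ∈ range (N + 2), ‖(p * (X - C r)).coeff k‖ ≤
      (∑ k ∈ range (N + 1), ‖p.coeff k‖) * (1 + ‖r‖) := by
  have htop : p.coeff (N + 1) = 0 := coeff_eq_zero_of_natDegree_lt (by omega)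
  have hcoeff_zero : ‖(p * (X - C r)).coeff 0‖ ≤ ‖p.coeff 0‖ * ‖r‖ := by
    simpa [mul_coeff_zero] using norm_mul_le (p.coeff 0) (-r)
  have hcoeff_succ (k : ℕ) :
      ‖(p * (X - C r)).coeff (k + 1)‖ ≤ ‖p.coeff k‖ + ‖p.coeff (k + 1)‖ * ‖r‖ := by
    rw [coeff_mul_X_sub_C]
    exact (norm_sub_le _ _).trans (add_le_add_right (norm_mul_le _ _) _)
  have hshift : ∑ k ∈ range (N + 1), ‖p.coeff (k + 1)‖ + ‖p.coeff 0‖ =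
      ∑ k ∈ range (N + 1), ‖p.coeff k‖ := by
    rw [← sum_range_succ' (fun k => ‖p.coeff k‖), sum_range_succ, htop, norm_zero, add_zero]
  calc ∑ k ∈ range (N + 2), ‖(p * (X - C r)).coeff k‖
      ≤ ∑ k ∈ range (N + 1), (‖p.coeff k‖ + ‖p.coeff (k + 1)‖ * ‖r‖) + ‖p.coeff 0‖ * ‖r‖ := by
        rw [sum_range_succ']
        exact add_le_add (sum_le_sum fun k _ => hcoeff_succ k) hcoeff_zero
    _ = (∑ k ∈ range (N + 1), ‖p.coeff k‖) * (1 + ‖r‖) := by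
        rw [sum_add_distrib, ← sum_mul, add_assoc, ← add_mul, hshift]
        ring

theorem Lagrange.sum_range_norm_coeff_nodal_le {R ι : Type*} [SeminormedCommRing R]
    [NormOneClass R] (s : Finset ι) (v : ι → R) :
    ∑ k ∈ range (#s + 1), ‖(nodal s v).coeff k‖ ≤ ∏ i ∈ s, (1 + ‖v i‖) := by
  classical
  induction s using Finset.induction_on with
  | empty => simp [nodal]
  | insert a s ha ih =>
    have hdeg : (nodal s v).natDegree ≤ #s :=
      (natDegree_prod_le _ _).trans <| by
        simpa using sum_le_sum fun i _ => natDegree_X_sub_C_le (v i)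
    rw [nodal_insert_eq_nodal ha, mul_comm, card_insert_of_notMem ha, prod_insert ha,
      mul_comm (1 + _)]
    exact (sum_range_norm_coeff_mul_X_sub_C_le hdeg (v a)).trans
      (mul_le_mul_of_nonneg_right ih (by positivity))

namespace Matrix

theorem inv_vandermonde_transpose_apply {K : Type*} [Field K] {n : ℕ} {v : Fin n → K}
    (hv : Function.Injective v) (i k : Fin n) :
    (vandermonde v)ᵀ⁻¹ i k = (Lagrange.basis univ v i).coeff k := by
  refine congrFun (congrFun (inv_eq_left_inv (B := of fun i k : Fin n =>
    (Lagrange.basis univ v i).coeff k) ?_) i) k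
  ext i j
  have hdeg : (Lagrange.basis univ v i).natDegree < n := by
    rw [Lagrange.natDegree_basis hv.injOn (mem_univ i), card_univ, Fintype.card_fin]
    exact Nat.sub_lt (Fin.pos i) one_pos
  have heval : ∑ k : Fin n, (Lagrange.basis univ v i).coeff k * v j ^ (k : ℕ) =
      (Lagrange.basis univ v i).eval (v j) := by
    rw [eval_eq_sum_range' hdeg, ← Fin.sum_univ_eq_sum_range]
  simp only [mul_apply, of_apply, transpose_apply, vandermonde_apply, heval, one_apply]
  split_ifs with hij
  · subst hij
    exact Lagrange.eval_basis_self hv.injOn (mem_univ i)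
  · exact Lagrange.eval_basis_of_ne hij (mem_univ j)

theorem norm_mulVec_apply_le {m n R : Type*} [Fintype n] [SeminormedRing R]
    (A : Matrix m n R) {b : n → R} {M : ℝ} (hb : ∀ k, ‖b k‖ ≤ M) (i : m) :
    ‖(A *ᵥ b) i‖ ≤ (∑ k, ‖A i k‖) * M := by
  rw [mulVec, dotProduct, sum_mul]
  exact (norm_sum_le _ _).trans (sum_le_sum fun k _ => (norm_mul_le _ _).trans
    (mul_le_mul_of_nonneg_left (hb k) (norm_nonneg _)))

theorem norm_inv_vandermonde_transpose_mulVec_apply_le {K : Type*} [NormedField K] {n : ℕ}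
    {v : Fin n → K} (hv : Function.Injective v) {b : Fin n → K} {M : ℝ}
    (hb : ∀ k, ‖b k‖ ≤ M) (i : Fin n) :
    ‖((vandermonde v)ᵀ⁻¹ *ᵥ b) i‖ ≤ (∏ m ∈ univ.erase i, (1 + ‖v m‖) / ‖v i - v m‖) * M := by
  refine (norm_mulVec_apply_le _ hb i).trans (mul_le_mul_of_nonneg_right ?_
    ((norm_nonneg _).trans (hb i)))
  have hcard : #(univ.erase i) + 1 = n := by
    rw [card_erase_of_mem (mem_univ i), card_univ, Fintype.card_fin]
    exact Nat.sub_add_cancel (Fin.pos i)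
  have hbasis : Lagrange.basis univ v i =
      C (Lagrange.nodalWeight univ v i) * Lagrange.nodal (univ.erase i) v := by
    rw [Lagrange.basis_eq_prod_sub_inv_mul_nodal_div (mem_univ i),
      Lagrange.nodal_erase_eq_nodal_div (mem_univ i)]
  simp only [inv_vandermonde_transpose_apply hv, hbasis, coeff_C_mul, norm_mul, ← mul_sum]
  have hnodal := Lagrange.sum_range_norm_coeff_nodal_le (univ.erase i) v
  rw [hcard, ← Fin.sum_univ_eq_sum_range] at hnodal
  rw [Lagrange.nodalWeight, norm_prod, prod_div_distrib, div_eq_inv_mul, ← prod_inv_distrib]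
  simp only [norm_inv]
  exact mul_le_mul_of_nonneg_left hnodal (by positivity)

end Matrix

theorem zpow_one_sub_natCast_eq_inv_pow {G : Type*} [DivisionRing G] (a : G) {k : ℕ}
    (hk : 1 ≤ k) : a ^ (1 - (k : ℤ)) = a⁻¹ ^ (k - 1) := by
  rw [show 1 - (k : ℤ) = -((k - 1 : ℕ) : ℤ) by omega, _root_.zpow_neg, zpow_natCast, inv_pow]

theorem prod_erase_le_pow_mul_pow_card_filter {ι : Type*} [Fintype ι] [DecidableEq ι]
    {f : ι → ℝ} {p : ι → Prop} [DecidablePred p] {c d : ℝ} {i : ι}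
    (hf : ∀ m ∈ univ.erase i, 0 ≤ f m) (h : ∀ m ∈ univ.erase i, f m ≤ c * if p m then d else 1) :
    ∏ m ∈ univ.erase i, f m ≤ c ^ (Fintype.card ι - 1) * d ^ #{m ∈ univ.erase i | p m} := by
  refine (prod_le_prod hf h).trans_eq ?_
  rw [prod_mul_distrib, prod_const, card_erase_of_mem (mem_univ i), card_univ, prod_ite,
    prod_const, prod_const_one, mul_one]

def ClusterSeparated {ι κ E : Type*} [SeminormedAddCommGroup E] (cl : ι → κ) (a b : ℝ)
    (v : ι → E) : Prop :=
  (∀ i j, i ≠ j → cl i = cl j → a ≤ ‖v i - v j‖) ∧ ∀ i j, cl i ≠ cl j → b ≤ ‖v i - v j‖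

namespace ClusterSeparated

variable {ι κ E : Type*} [SeminormedAddCommGroup E] {cl : ι → κ} {a b : ℝ} {v : ι → E}

theorem mono {a' b' : ℝ} (h : ClusterSeparated cl a b v) (ha : a' ≤ a) (hb : b' ≤ b) :
    ClusterSeparated cl a' b' v :=
  ⟨fun i j hij hc => ha.trans (h.1 i j hij hc), fun i j hc => hb.trans (h.2 i j hc)⟩

theorem of_norm_sub_le {w : ι → E} {r : ℝ} (h : ClusterSeparated cl a b v)
    (hw : ∀ i, ‖w i - v i‖ ≤ r) : ClusterSeparated cl (a - 2 * r) (b - 2 * r) w := by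
  have key {c : ℝ} {i j : ι} (hc : c ≤ ‖v i - v j‖) : c - 2 * r ≤ ‖w i - w j‖ := by
    have h₁ := norm_sub_le_norm_sub_add_norm_sub (v i) (w i) (v j)
    have h₂ := norm_sub_le_norm_sub_add_norm_sub (w i) (w j) (v j)
    linarith [norm_sub_rev (v i) (w i), hw i, hw j]
  exact ⟨fun i j hij hc => key (h.1 i j hij hc), fun i j hc => key (h.2 i j hc)⟩

theorem injective (h : ClusterSeparated cl a b v) (ha : 0 < a) (hb : 0 < b) :
    Function.Injective v := by
  intro i j hij
  by_contra hne
  have hsep : min a b ≤ ‖v i - v j‖ := by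
    by_cases hc : cl i = cl j
    · exact (min_le_left a b).trans (h.1 i j hne hc)
    · exact (min_le_right a b).trans (h.2 i j hc)
  rw [hij, sub_self, norm_zero] at hsep
  exact (lt_min ha hb).not_ge hsep

theorem prod_erase_div_norm_sub_le [Fintype ι] [DecidableEq ι] [DecidableEq κ] {c δ T K : ℝ}
    (h : ClusterSeparated cl (δ / c) (T / c) v) (hc : 0 < c) (hδ : 0 < δ) (hT : 0 < T)
    (hK : ∀ m, 1 + ‖v m‖ ≤ K) (i : ι) :
    ∏ m ∈ univ.erase i, (1 + ‖v m‖) / ‖v i - v m‖ ≤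
      (c * K * max 1 T⁻¹) ^ (Fintype.card ι - 1) * δ⁻¹ ^ #{m ∈ univ.erase i | cl m = cl i} := by
  refine prod_erase_le_pow_mul_pow_card_filter (fun m _ => by positivity) fun m hm => ?_
  have him : i ≠ m := (ne_of_mem_erase hm).symm
  have hK0 : 0 ≤ K := (by positivity : (0 : ℝ) ≤ 1 + ‖v m‖).trans (hK m)
  have hcK : 0 ≤ c * K := by positivity
  split_ifs with hcl
  · calc (1 + ‖v m‖) / ‖v i - v m‖ ≤ K / (δ / c) :=
          div_le_div₀ (by positivity) (hK m) (by positivity) (h.1 i m him hcl.symm)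
      _ = c * K * δ⁻¹ := by field_simp
      _ ≤ c * K * max 1 T⁻¹ * δ⁻¹ :=
          mul_le_mul_of_nonneg_right (le_mul_of_one_le_right hcK (le_max_left _ _)) (by positivity)
  · calc (1 + ‖v m‖) / ‖v i - v m‖ ≤ K / (T / c) :=
          div_le_div₀ (by positivity) (hK m) (by positivity) (h.2 i m (Ne.symm hcl))
      _ = c * K * T⁻¹ := by field_simp
      _ ≤ c * K * max 1 T⁻¹ * 1 := by
          rw [mul_one]
          exact mul_le_mul_of_nonneg_left (le_max_right _ _) hcK

end ClusterSeparated

/-- Proposition 6.1: row-wise bound on the inverse of the perturbed Vandermonde matrix. If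
`|x̃_j - x_j| ≤ ρ̄ δ^{2(ℓ*-ℓ_{(j)})+1}` for a clustered configuration, then the `x̃_j` are
pairwise distinct, `Ṽ` is invertible and `|(Ṽ⁻¹ b)_j| ≤ C δ^{1-ℓ_{(j)}} max_i |b_i|`. -/
theorem prony_vandermonde_inverse_row_bound
    (n ζ : ℕ) (hn : 2 ≤ n)
    (ℓ : Fin ζ → ℕ)
    (lstar : ℕ)
    (τ η T : ℝ) (hτ : 1 < τ) (hT : 0 < T) :
    ∃ C₁ : ℝ, 0 < C₁ ∧
      ∀ (δ : ℝ) (x xt : Fin n → ℂ) (cl : Fin n → Fin ζ) (ρbar : ℝ),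
        0 < δ → δ < 1 → τ * δ < T →
        (∀ j, ‖x j‖ = 1) →
        Function.Injective x →
        (∀ i j, i ≠ j → cl i = cl j →
          δ ≤ ‖x i - x j‖ ∧ ‖x i - x j‖ ≤ τ * δ) →
        (∀ i j, cl i ≠ cl j →
          T ≤ ‖x i - x j‖ ∧ ‖x i - x j‖ ≤ η * T) →
        (∀ s, (Finset.univ.filter fun j => cl j = s).card = ℓ s) →
        0 < ρbar → ρbar < (1 / 3) * min 1 (η * T) →
        (∀ j, ‖xt j - x j‖ ≤
          ρbar * δ ^ (2 * (lstar - ℓ (cl j)) + 1)) →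
        Function.Injective xt ∧
        IsUnit (Matrix.of fun k j : Fin n => xt j ^ (k : ℕ)).det ∧
        ∀ (j : Fin n) (b : Fin n → ℂ),
          ‖((Matrix.of fun k j : Fin n => xt j ^ (k : ℕ))⁻¹ *ᵥ b) j‖ ≤
            C₁ * δ ^ (1 - (ℓ (cl j) : ℤ)) *
              Finset.univ.sup' ⟨⟨0, by omega⟩, Finset.mem_univ _⟩
                (fun i => ‖b i‖) := by
  refine ⟨(7 * max 1 T⁻¹) ^ (n - 1), by positivity, ?_⟩
  intro δ x xt cl ρbar hδ hδ1 hτδ hx _ hsame hdiff hcard hρ hρ3 hxt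
  have hclose (m : Fin n) : ‖xt m - x m‖ ≤ δ / 3 := by
    have hpow : δ ^ (2 * (lstar - ℓ (cl m)) + 1) ≤ δ := pow_le_of_le_one hδ.le hδ1.le (by omega)
    have : ρbar < 1 / 3 := hρ3.trans_le (by simp)
    nlinarith [hxt m]
  have hnorm (m : Fin n) : 1 + ‖xt m‖ ≤ 7 / 3 := by
    linarith [norm_le_norm_add_norm_sub' (xt m) (x m), hx m, hclose m]
  have hsep : ClusterSeparated cl (δ / 3) (T / 3) xt :=
    (ClusterSeparated.of_norm_sub_le ⟨fun i j hij hc => (hsame i j hij hc).1,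
      fun i j hc => (hdiff i j hc).1⟩ hclose).mono (by linarith) (by nlinarith)
  have hinj : Function.Injective xt := hsep.injective (by positivity) (by positivity)
  have hV : (Matrix.of fun k j : Fin n => xt j ^ (k : ℕ)) = (vandermonde xt)ᵀ := rfl
  refine ⟨hinj, ?_, fun j b => ?_⟩
  · rw [hV, det_transpose]
    exact (det_vandermonde_ne_zero_iff.mpr hinj).isUnit
  have hb (k : Fin n) : ‖b k‖ ≤ univ.sup' ⟨⟨0, by omega⟩, mem_univ _⟩ fun i => ‖b i‖ :=
    le_sup' (fun i => ‖b i‖) (mem_univ k)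
  have hcount : #{m ∈ univ.erase j | cl m = cl j} = ℓ (cl j) - 1 := by
    rw [filter_erase, card_erase_of_mem (by simp), hcard]
  have hℓ : 1 ≤ ℓ (cl j) := by
    rw [← hcard]
    exact card_pos.mpr ⟨j, by simp⟩
  rw [hV, zpow_one_sub_natCast_eq_inv_pow δ hℓ, ← hcount]
  refine (norm_inv_vandermonde_transpose_mulVec_apply_le hinj hb j).trans
    (mul_le_mul_of_nonneg_right ?_ ((norm_nonneg _).trans (hb j)))
  have hrow := hsep.prod_erase_div_norm_sub_le three_pos hδ hT hnorm j
  rwa [Fintype.card_fin, show (3 : ℝ) * (7 / 3) = 7 by norm_num] at hrow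
end

section
/- Fix integers n ≥ 2, ζ ≥ 1 and cluster sizes ℓ_1,…,ℓ_ζ ≥ 1 with ℓ_1+…+ℓ_ζ = n and ℓ* = max_s ℓ_s, fix τ > 1, η > 1, T > 0 and K > 0. Then there exist c > 0 and C > 0, depending only on these fixed parameters and not on δ or ε, such that the following holds. Let x_1,…,x_n on the unit circle form an (n,ζ,δ,τ,η,T)-clustered configuration with clusters C_1,…,C_ζ of sizes ℓ_1,…,ℓ_ζ (0 < δ < 1, τδ < T), let 0 < ε ≤ c δ^{2ℓ*−1}, and let x̃_1,…,x̃_n ∈ ℂ be pairwise distinct with |x̃_j − x_j| ≤ K ε δ^{2−2ℓ_{(j)}} for every j, where ℓ_{(j)} is the size of the cluster containing j. Let V and Ṽ be the n×n Vandermonde matrices with entries V_{k,s} = x_s^k and Ṽ_{k,s} = x̃_s^k (0 ≤ k ≤ n−1). Then Ṽ is invertible and for all j, s ∈ {1,…,n}, with δ_{j,s} the Kronecker delta: |δ_{j,s} − (Ṽ^{−1}V)_{j,s}| ≤ C ε δ^{1−2ℓ_{(j)}} if s lies in the same cluster as j, and |δ_{j,s} − (Ṽ^{−1}V)_{j,s}|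 ≤ C ε δ^{2−ℓ_{(j)}−L} if s lies in a different cluster, where L is the maximum cluster size among clusters different from the cluster of j. -/
open Matrix

/-!
By Lagrange interpolation, `(Ṽ⁻¹ V)_{j,s} = L̃_j(x_s) = ∏_{i ≠ j} (x_s - x̃_i) / (x̃_j - x̃_i)`,
with `L̃_j` the Lagrange basis polynomials of the perturbed nodes. Perturbations of size at most
`δ / 4` at most halve the distances between nodes, and only nodes of one cluster are close: the
denominators multiply to at least a constant times `δ^{ℓ_{(j)} - 1}`, the numerators with `i ≠ s`
to at most a constant times `δ^{ℓ_{(s)} - 1}` (times `δ^{ℓ_{(s)} - 2}` if `s` lies in the cluster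
of `j`), and the remaining numerator `x_s - x̃_s` is at most `K ε δ^{2 - 2ℓ_{(s)}}`. On the
diagonal every factor is `1 + (x_j - x̃_j) / (x̃_j - x̃_i)`, so the product is
`1 + O(ε δ^{1 - 2ℓ_{(j)}})`.
-/

open Finset Polynomial

section ProductBounds

variable {ι : Type*} {s : Finset ι} {p : ι → Prop} [DecidablePred p] {f : ι → ℝ} {A δ : ℝ}

lemma prod_mul_ite_one :
    ∏ i ∈ s, (A * if p i then δ else 1) = A ^ #s * δ ^ #{i ∈ s | p i} := by
  rw [prod_mul_distrib, prod_const, prod_ite, prod_const, prod_const_one, mul_one]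

lemma prod_le_pow_mul_pow_card_filter (h0 : ∀ i ∈ s, 0 ≤ f i)
    (h : ∀ i ∈ s, f i ≤ A * if p i then δ else 1) :
    ∏ i ∈ s, f i ≤ A ^ #s * δ ^ #{i ∈ s | p i} :=
  (prod_le_prod h0 h).trans_eq prod_mul_ite_one

lemma pow_mul_pow_card_filter_le_prod (hA : 0 ≤ A) (hδ : 0 ≤ δ)
    (h : ∀ i ∈ s, A * (if p i then δ else 1) ≤ f i) :
    A ^ #s * δ ^ #{i ∈ s | p i} ≤ ∏ i ∈ s, f i :=
  prod_mul_ite_one.symm.trans_le <|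
    prod_le_prod (fun i _ => mul_nonneg hA (by split_ifs <;> positivity)) h

end ProductBounds

lemma Real.exp_sub_one_le_mul_exp (t : ℝ) : Real.exp t - 1 ≤ t * Real.exp t := by
  have h := mul_le_mul_of_nonneg_right (Real.add_one_le_exp (-t)) (Real.exp_pos t).le
  rw [← Real.exp_add, neg_add_cancel, Real.exp_zero] at h
  linarith

lemma Lagrange.eval_basis_eq_prod {F ι : Type*} [Field F] [DecidableEq ι] (s : Finset ι)
    (v : ι → F) (j : ι) (z : F) :
    (Lagrange.basis s v j).eval z = ∏ i ∈ s.erase j, (z - v i) / (v j - v i) := by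
  simp only [Lagrange.basis, eval_prod, Lagrange.basisDivisor, eval_mul, eval_C, eval_sub,
    eval_X, div_eq_inv_mul]

lemma Matrix.of_pow_eq_vandermonde_transpose {R : Type*} [CommRing R] {n : ℕ} (v : Fin n → R) :
    (of fun k j : Fin n => v j ^ (k : ℕ)) = (vandermonde v)ᵀ :=
  rfl

lemma Matrix.isUnit_det_vandermonde_transpose {F : Type*} [Field F] {n : ℕ} {v : Fin n → F}
    (hv : Function.Injective v) : IsUnit (vandermonde v)ᵀ.det := by
  rw [det_transpose, isUnit_iff_ne_zero]
  exact det_vandermonde_ne_zero_iff.2 hv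

lemma Matrix.inv_vandermonde_transpose_mul_vandermonde_transpose {F : Type*} [Field F] {n : ℕ}
    {v : Fin n → F} (hv : Function.Injective v) (w : Fin n → F) :
    (vandermonde v)ᵀ⁻¹ * (vandermonde w)ᵀ = of fun j s => (Lagrange.basis univ v j).eval (w s) := by
  suffices h : (vandermonde v)ᵀ * (of fun j s => (Lagrange.basis univ v j).eval (w s)) =
      (vandermonde w)ᵀ by
    rw [← h, ← Matrix.mul_assoc, nonsing_inv_mul _ (isUnit_det_vandermonde_transpose hv),
      Matrix.one_mul]
  ext k s
  have hdeg : (X ^ (k : ℕ) : F[X]).degree < #(univ : Finset (Fin n)) := by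
    rw [degree_X_pow, card_univ, Fintype.card_fin]
    exact_mod_cast k.isLt
  have h := congrArg (eval (w s)) (Lagrange.eq_interpolate (v := v) (s := univ) hv.injOn hdeg)
  simp only [eval_pow, eval_X, Lagrange.interpolate_apply, eval_finsetSum, eval_mul, eval_C] at h
  simp [Matrix.mul_apply, vandermonde_apply, h]

section PerturbedNodes

variable {ι κ : Type*} {x xt : ι → ℂ} {cl : ι → κ} {δ τ T : ℝ}

lemma norm_sub_le_two_mul_norm_sub_of_perturb (hsep : ∀ i k, i ≠ k → δ ≤ ‖x i - x k‖)
    (hpert : ∀ i, ‖xt i - x i‖ ≤ δ / 4) {i k : ι} (hik : i ≠ k) :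
    ‖x i - x k‖ ≤ 2 * ‖xt i - xt k‖ := by
  have h : ‖x i - x k‖ ≤ ‖xt i - xt k‖ + ‖xt i - x i‖ + ‖xt k - x k‖ := by
    calc ‖x i - x k‖ = ‖(xt i - xt k) - (xt i - x i) + (xt k - x k)‖ := by congr 1; ring
      _ ≤ _ := (norm_add_le _ _).trans (add_le_add_left (norm_sub_le _ _) _)
  linarith [hsep i k hik, hpert i, hpert k]

lemma prod_norm_sub_le_pow_mul_pow_card [DecidableEq κ] (hτ : 0 ≤ τ) (hδ1 : δ ≤ 1)
    (hcirc : ∀ i, ‖x i‖ = 1) (hclose : ∀ i k, i ≠ k → cl i = cl k → ‖x i - x k‖ ≤ τ * δ)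
    (hpert : ∀ i, ‖xt i - x i‖ ≤ δ / 4) {S : Finset ι} {s : ι} (hs : s ∉ S) :
    ∏ i ∈ S, ‖x s - xt i‖ ≤ (τ + 3) ^ #S * δ ^ #{i ∈ S | cl i = cl s} := by
  refine prod_le_pow_mul_pow_card_filter (fun _ _ => norm_nonneg _) fun i hi => ?_
  have hδ : 0 ≤ δ := by linarith [norm_nonneg (xt i - x i), hpert i]
  have htri : ‖x s - xt i‖ ≤ ‖x s - x i‖ + δ / 4 := by
    linarith [norm_sub_le_norm_sub_add_norm_sub (x s) (x i) (xt i), norm_sub_rev (x i) (xt i),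
      hpert i]
  split_ifs with h
  · linarith [hclose s i (fun h' => hs (h' ▸ hi)) h.symm]
  · linarith [norm_sub_le (x s) (x i), hcirc s, hcirc i]

variable [Fintype ι] [DecidableEq ι]

lemma norm_eval_basis_self_sub_one_le (hδ : 0 < δ) (hsep : ∀ i k, i ≠ k → δ ≤ ‖x i - x k‖)
    (hpert : ∀ i, ‖xt i - x i‖ ≤ δ / 4) (j : ι) :
    ‖(Lagrange.basis univ xt j).eval (x j) - 1‖ ≤
      2 * Fintype.card ι * Real.exp (Fintype.card ι / 2) * (‖xt j - x j‖ / δ) := by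
  set r := ‖xt j - x j‖ / δ
  have hr : r ≤ 1 / 4 := by rw [div_le_iff₀ hδ]; linarith [hpert j]
  have hden : ∀ i ∈ univ.erase j, δ / 2 ≤ ‖xt j - xt i‖ := fun i hi => by
    linarith [hsep j i (ne_of_mem_erase hi).symm,
      norm_sub_le_two_mul_norm_sub_of_perturb hsep hpert (ne_of_mem_erase hi).symm]
  have hfactor : ∀ i ∈ univ.erase j,
      (x j - xt i) / (xt j - xt i) = 1 + (x j - xt j) / (xt j - xt i) := fun i hi => by
    have : xt j - xt i ≠ 0 := norm_pos_iff.1 ((half_pos hδ).trans_le (hden i hi))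
    field_simp
    ring
  have hw : ∀ i ∈ univ.erase j, ‖(x j - xt j) / (xt j - xt i)‖ ≤ 2 * r := fun i hi => by
    rw [norm_div, norm_sub_rev, div_le_iff₀ ((half_pos hδ).trans_le (hden i hi))]
    calc ‖xt j - x j‖ = 2 * r * (δ / 2) := by simp only [r]; field_simp
      _ ≤ 2 * r * ‖xt j - xt i‖ := by gcongr; exact hden i hi
  set t : ℝ := Fintype.card ι * (2 * r)
  have hsum : ∑ i ∈ univ.erase j, ‖(x j - xt j) / (xt j - xt i)‖ ≤ t := by
    refine (sum_le_card_nsmul _ _ _ hw).trans ?_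
    have hcard : (#(univ.erase j) : ℝ) ≤ Fintype.card ι := by exact_mod_cast card_le_univ _
    rw [nsmul_eq_mul]
    exact mul_le_mul_of_nonneg_right hcard (by positivity)
  have ht : t ≤ Fintype.card ι / 2 := by
    simp only [t]
    nlinarith [(Nat.cast_nonneg (Fintype.card ι) : (0 : ℝ) ≤ _)]
  rw [Lagrange.eval_basis_eq_prod, prod_congr rfl hfactor]
  calc _ ≤ Real.exp (∑ i ∈ univ.erase j, ‖(x j - xt j) / (xt j - xt i)‖) - 1 :=
        norm_prod_one_add_sub_one_le _ _
    _ ≤ Real.exp t - 1 := by gcongr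
    _ ≤ t * Real.exp t := Real.exp_sub_one_le_mul_exp t
    _ ≤ t * Real.exp (Fintype.card ι / 2) := by gcongr
    _ = _ := by ring

variable [DecidableEq κ]

lemma pow_mul_pow_card_le_prod_norm_sub (hδ : 0 ≤ δ) (hT : 0 ≤ T)
    (hsep : ∀ i k, i ≠ k → δ ≤ ‖x i - x k‖) (hfar : ∀ i k, cl i ≠ cl k → T ≤ ‖x i - x k‖)
    (hpert : ∀ i, ‖xt i - x i‖ ≤ δ / 4) (j : ι) :
    (min T 1 / 2) ^ (Fintype.card ι - 1) * δ ^ #{i ∈ univ.erase j | cl i = cl j} ≤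
      ∏ i ∈ univ.erase j, ‖xt j - xt i‖ := by
  have h := pow_mul_pow_card_filter_le_prod (s := univ.erase j) (p := fun i => cl i = cl j)
    (f := fun i => ‖xt j - xt i‖) (A := min T 1 / 2) (by positivity) hδ fun i hi => by
      have h2 := norm_sub_le_two_mul_norm_sub_of_perturb hsep hpert (ne_of_mem_erase hi).symm
      split_ifs with h
      · nlinarith [hsep j i (ne_of_mem_erase hi).symm, min_le_right T 1]
      · linarith [hfar j i (Ne.symm h), min_le_left T 1]
  rwa [card_erase_of_mem (mem_univ j), card_univ] at h

lemma card_filter_erase_erase_sub_card_filter_erase {j s : ι} (hjs : j ≠ s) :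
    (#{i ∈ (univ.erase j).erase s | cl i = cl s} : ℤ) - #{i ∈ univ.erase j | cl i = cl j} =
      #{i | cl i = cl s} - #{i | cl i = cl j} - if cl s = cl j then 1 else 0 := by
  have e1 : #{i ∈ (univ.erase j).erase s | cl i = cl s} + 1 =
      #{i ∈ univ.erase j | cl i = cl s} := by
    rw [filter_erase, card_erase_add_one]
    simp [hjs.symm]
  have e2 : #{i ∈ univ.erase j | cl i = cl j} + 1 = #{i | cl i = cl j} := by
    rw [filter_erase, card_erase_add_one]
    simp
  split_ifs with h
  · have e3 : #{i ∈ univ.erase j | cl i = cl s} + 1 = #{i | cl i = cl s} := by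
      rw [filter_erase, card_erase_add_one]
      simp [h]
    rw [h] at e1 e3 ⊢
    omega
  · have e3 : #{i ∈ univ.erase j | cl i = cl s} = #{i | cl i = cl s} := by
      rw [filter_erase, erase_eq_of_notMem]
      simp [Ne.symm h]
    omega

lemma norm_eval_basis_le (hδ : 0 < δ) (hδ1 : δ ≤ 1) (hτ : 0 ≤ τ) (hT : 0 < T)
    (hcirc : ∀ i, ‖x i‖ = 1) (hsep : ∀ i k, i ≠ k → δ ≤ ‖x i - x k‖)
    (hclose : ∀ i k, i ≠ k → cl i = cl k → ‖x i - x k‖ ≤ τ * δ)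
    (hfar : ∀ i k, cl i ≠ cl k → T ≤ ‖x i - x k‖) (hpert : ∀ i, ‖xt i - x i‖ ≤ δ / 4)
    {j s : ι} (hjs : j ≠ s) :
    ‖(Lagrange.basis univ xt j).eval (x s)‖ ≤
      (τ + 3) ^ (Fintype.card ι - 2) / (min T 1 / 2) ^ (Fintype.card ι - 1) * ‖xt s - x s‖ *
        δ ^ ((#{i | cl i = cl s} : ℤ) - #{i | cl i = cl j} - if cl s = cl j then 1 else 0) := by
  have hs : s ∈ univ.erase j := mem_erase.2 ⟨hjs.symm, mem_univ s⟩
  have hnum := prod_norm_sub_le_pow_mul_pow_card hτ hδ1 hcirc hclose hpert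
    (notMem_erase s (univ.erase j))
  rw [card_erase_of_mem hs, card_erase_of_mem (mem_univ j), card_univ, Nat.sub_sub] at hnum
  have hden := pow_mul_pow_card_le_prod_norm_sub hδ.le hT.le hsep hfar hpert j
  rw [← card_filter_erase_erase_sub_card_filter_erase hjs, zpow_sub₀ hδ.ne', zpow_natCast,
    zpow_natCast, Lagrange.eval_basis_eq_prod, norm_prod, norm_sub_rev (xt s)]
  simp only [norm_div]
  rw [prod_div_distrib, ← mul_prod_erase _ _ hs]
  calc _ ≤ ‖x s - xt s‖ * ((τ + 3) ^ (Fintype.card ι - 2) *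
          δ ^ #{i ∈ (univ.erase j).erase s | cl i = cl s}) /
        ((min T 1 / 2) ^ (Fintype.card ι - 1) * δ ^ #{i ∈ univ.erase j | cl i = cl j}) :=
        div_le_div₀ (by positivity) (by gcongr) (by positivity) hden
    _ = _ := by field_simp

end PerturbedNodes

lemma mul_zpow_le_quarter {K ε δ : ℝ} {l L : ℕ} (hK : 0 < K) (hδ : 0 < δ) (hδ1 : δ ≤ 1)
    (hl : l ≤ L) (hε : ε ≤ 1 / (4 * K) * δ ^ (2 * L - 1)) :
    K * ε * δ ^ (2 - 2 * (l : ℤ)) ≤ δ / 4 := by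
  have hKε : K * ε ≤ δ ^ (2 * L - 1) / 4 := by
    calc K * ε ≤ K * (1 / (4 * K) * δ ^ (2 * L - 1)) := by gcongr
      _ = δ ^ (2 * L - 1) / 4 := by field_simp
  -- `2 * L - 1` truncates only when `L = 0`, and then `l = 0` too
  have hexp : δ ^ (((2 * L - 1 : ℕ) : ℤ) + (2 - 2 * l)) ≤ δ ^ (1 : ℤ) :=
    zpow_le_zpow_right_of_le_one₀ hδ hδ1 (by omega)
  calc K * ε * δ ^ (2 - 2 * (l : ℤ)) ≤ δ ^ (2 * L - 1) / 4 * δ ^ (2 - 2 * (l : ℤ)) := by gcongr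
    _ = δ ^ (((2 * L - 1 : ℕ) : ℤ) + (2 - 2 * l)) / 4 := by
      rw [zpow_add₀ hδ.ne', zpow_natCast]
      ring
    _ ≤ δ / 4 := by rw [zpow_one] at hexp; linarith

lemma mul_mul_zpow_le_mul_mul_zpow {A B K ε r δ : ℝ} {p e e' : ℤ} (hδ : 0 < δ) (hδ1 : δ ≤ 1)
    (hA : 0 ≤ A) (hAB : A ≤ B) (hK : 0 ≤ K) (hε : 0 ≤ ε) (hr : r ≤ K * ε * δ ^ p)
    (he : e' ≤ p + e) :
    A * r * δ ^ e ≤ B * K * ε * δ ^ e' :=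
  calc A * r * δ ^ e ≤ A * (K * ε * δ ^ p) * δ ^ e := by gcongr
    _ = A * K * ε * δ ^ (p + e) := by rw [zpow_add₀ hδ.ne']; ring
    _ ≤ B * K * ε * δ ^ e' :=
      mul_le_mul (by gcongr) (zpow_le_zpow_right_of_le_one₀ hδ hδ1 he) (by positivity)
        (by have := hA.trans hAB; positivity)

theorem prony_vandermonde_transfer_bound_general
    (n ζ : ℕ)
    (ℓ : Fin ζ → ℕ)
    (lstar : ℕ) (hlstar : lstar = Finset.univ.sup ℓ)
    (τ η T K : ℝ) (hτ : 1 < τ) (hT : 0 < T) (hK : 0 < K) :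
    ∃ c C₁ : ℝ, 0 < c ∧ 0 < C₁ ∧
      ∀ (δ ε : ℝ) (x xt : Fin n → ℂ) (cl : Fin n → Fin ζ),
        0 < δ → δ < 1 → τ * δ < T →
        (∀ j, norm (x j) = 1) →
        Function.Injective x →
        (∀ i j, i ≠ j → cl i = cl j →
          δ ≤ norm (x i - x j) ∧ norm (x i - x j) ≤ τ * δ) →
        (∀ i j, cl i ≠ cl j →
          T ≤ norm (x i - x j) ∧ norm (x i - x j) ≤ η * T) →
        (∀ s, (Finset.univ.filter fun j => cl j = s).card = ℓ s) →
        0 < ε → ε ≤ c * δ ^ (2 * lstar - 1) →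
        Function.Injective xt →
        (∀ j, norm (xt j - x j) ≤
          K * ε * δ ^ (2 - 2 * (ℓ (cl j) : ℤ))) →
        IsUnit (Matrix.of fun k j : Fin n => xt j ^ (k : ℕ)).det ∧
        ∀ j s : Fin n,
          (cl s = cl j →
            norm ((if j = s then (1 : ℂ) else 0) -
                (((Matrix.of fun k j' : Fin n => xt j' ^ (k : ℕ))⁻¹ *
                  (Matrix.of fun k j' : Fin n => x j' ^ (k : ℕ))) j s)) ≤
              C₁ * ε * δ ^ (1 - 2 * (ℓ (cl j) : ℤ))) ∧
          (cl s ≠ cl j →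
            norm ((if j = s then (1 : ℂ) else 0) -
                (((Matrix.of fun k j' : Fin n => xt j' ^ (k : ℕ))⁻¹ *
                  (Matrix.of fun k j' : Fin n => x j' ^ (k : ℕ))) j s)) ≤
              C₁ * ε * δ ^ (2 - (ℓ (cl j) : ℤ) -
                (((Finset.univ.filter fun a => a ≠ cl j).sup ℓ : ℕ) : ℤ))) := by
  set D := 2 * n * Real.exp (n / 2)
  set C₀ := (τ + 3) ^ (n - 2) / (min T 1 / 2) ^ (n - 1)
  refine ⟨1 / (4 * K), (D + C₀) * K, by positivity, by positivity, ?_⟩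
  intro δ ε x xt cl hδ hδ1 hτδ hcirc _ hclose hfar hcard hε hεc hxt hpert
  have hsep : ∀ i k, i ≠ k → δ ≤ ‖x i - x k‖ := fun i k hik => by
    by_cases h : cl i = cl k
    · exact (hclose i k hik h).1
    · nlinarith [(hfar i k h).1]
  have hsmall : ∀ i, ‖xt i - x i‖ ≤ δ / 4 := fun i => (hpert i).trans <|
    mul_zpow_le_quarter hK hδ hδ1.le (hlstar ▸ le_sup (mem_univ _)) hεc
  have hoff : ∀ j s, j ≠ s → ‖(Lagrange.basis univ xt j).eval (x s)‖ ≤ C₀ * ‖xt s - x s‖ *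
      δ ^ ((ℓ (cl s) : ℤ) - ℓ (cl j) - if cl s = cl j then 1 else 0) := fun j s hjs => by
    simpa only [hcard, Fintype.card_fin] using norm_eval_basis_le hδ hδ1.le (by linarith) hT hcirc
      hsep (fun i k hik h => (hclose i k hik h).2) (fun i k h => (hfar i k h).1) hsmall hjs
  simp only [of_pow_eq_vandermonde_transpose,
    inv_vandermonde_transpose_mul_vandermonde_transpose hxt, of_apply]
  refine ⟨isUnit_det_vandermonde_transpose hxt, fun j s => ⟨fun hcs => ?_, fun hcs => ?_⟩⟩
  · rcases eq_or_ne j s with rfl | hjs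
    · rw [if_pos rfl, norm_sub_rev]
      refine (norm_eval_basis_self_sub_one_le hδ hsep hsmall j).trans ?_
      rw [Fintype.card_fin]
      refine (le_of_eq ?_).trans (mul_mul_zpow_le_mul_mul_zpow (A := D) (e := -1) hδ hδ1.le
        (by positivity) (le_add_of_nonneg_right (by positivity)) hK.le hε.le (hpert j) (by omega))
      rw [_root_.zpow_neg_one, mul_assoc D, ← div_eq_mul_inv]
    · rw [if_neg hjs, zero_sub, norm_neg]
      exact (hoff j s hjs).trans (mul_mul_zpow_le_mul_mul_zpow hδ hδ1.le (by positivity)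
        (le_add_of_nonneg_left (by positivity)) hK.le hε.le (hpert s)
        (by rw [if_pos hcs, hcs]; omega))
  · have hjs : j ≠ s := fun h => hcs (h ▸ rfl)
    have hL : ℓ (cl s) ≤ (univ.filter fun a => a ≠ cl j).sup ℓ :=
      le_sup (mem_filter.2 ⟨mem_univ (cl s), hcs⟩)
    rw [if_neg hjs, zero_sub, norm_neg]
    exact (hoff j s hjs).trans (mul_mul_zpow_le_mul_mul_zpow hδ hδ1.le (by positivity)
      (le_add_of_nonneg_left (by positivity)) hK.le hε.le (hpert s) (by rw [if_neg hcs]; omega))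

/-- Proposition 6.2: entrywise bound on `I - Ṽ⁻¹V` for a clustered configuration. If the
perturbed nodes satisfy `|x̃_j - x_j| ≤ K ε δ^{2-2ℓ_{(j)}}` with `ε ≤ c δ^{2ℓ*-1}`, then
`|δ_{j,s} - (Ṽ⁻¹V)_{j,s}| ≤ C ε δ^{1-2ℓ_{(j)}}` for in-cluster `s`, and
`≤ C ε δ^{2-ℓ_{(j)}-L}` otherwise, where `L` is the largest cluster size among the other
clusters. -/
theorem prony_vandermonde_transfer_bound
    (n ζ : ℕ) (hn : 2 ≤ n) (hζ : 1 ≤ ζ)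
    (ℓ : Fin ζ → ℕ) (hℓ : ∀ s, 1 ≤ ℓ s) (hsum : ∑ s, ℓ s = n)
    (lstar : ℕ) (hlstar : lstar = Finset.univ.sup ℓ)
    (τ η T K : ℝ) (hτ : 1 < τ) (hη : 1 < η) (hT : 0 < T) (hK : 0 < K) :
    ∃ c C₁ : ℝ, 0 < c ∧ 0 < C₁ ∧
      ∀ (δ ε : ℝ) (x xt : Fin n → ℂ) (cl : Fin n → Fin ζ),
        0 < δ → δ < 1 → τ * δ < T →
        (∀ j, norm (x j) = 1) →
        Function.Injective x →
        (∀ i j, i ≠ j → cl i = cl j →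
          δ ≤ norm (x i - x j) ∧ norm (x i - x j) ≤ τ * δ) →
        (∀ i j, cl i ≠ cl j →
          T ≤ norm (x i - x j) ∧ norm (x i - x j) ≤ η * T) →
        (∀ s, (Finset.univ.filter fun j => cl j = s).card = ℓ s) →
        0 < ε → ε ≤ c * δ ^ (2 * lstar - 1) →
        Function.Injective xt →
        (∀ j, norm (xt j - x j) ≤
          K * ε * δ ^ (2 - 2 * (ℓ (cl j) : ℤ))) →
        IsUnit (Matrix.of fun k j : Fin n => xt j ^ (k : ℕ)).det ∧
        ∀ j s : Fin n,
          (cl s = cl j →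
            norm ((if j = s then (1 : ℂ) else 0) -
                (((Matrix.of fun k j' : Fin n => xt j' ^ (k : ℕ))⁻¹ *
                  (Matrix.of fun k j' : Fin n => x j' ^ (k : ℕ))) j s)) ≤
              C₁ * ε * δ ^ (1 - 2 * (ℓ (cl j) : ℤ))) ∧
          (cl s ≠ cl j →
            norm ((if j = s then (1 : ℂ) else 0) -
                (((Matrix.of fun k j' : Fin n => xt j' ^ (k : ℕ))⁻¹ *
                  (Matrix.of fun k j' : Fin n => x j' ^ (k : ℕ))) j s)) ≤
              C₁ * ε * δ ^ (2 - (ℓ (cl j) : ℤ) -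
                (((Finset.univ.filter fun a => a ≠ cl j).sup ℓ : ℕ) : ℤ))) :=
  prony_vandermonde_transfer_bound_general n ζ ℓ lstar hlstar τ η T K hτ hT hK
end

section
/- Fix integers n ≥ 2, ζ ≥ 1 and cluster sizes ℓ_1,…,ℓ_ζ ≥ 1 with ℓ_1+…+ℓ_ζ = n and ℓ* = max_s ℓ_s, and fix τ > 1, η > 1, T > 0. Then there exists a constant c > 0, depending only on these fixed parameters and not on δ, such that the following holds. Let x_1,…,x_n on the unit circle form an (n,ζ,δ,τ,η,T)-clustered configuration with clusters of sizes ℓ_1,…,ℓ_ζ (0 < δ < 1, τδ < T), and let x̃_1,…,x̃_n ∈ ℂ satisfy |x̃_j − x_j| ≤ ρ̄ δ^{2(ℓ*−ℓ_{(j)})+1} for every j, where ℓ_{(j)} is the size of the cluster containing j and 0 < ρ̄ < (1/3)·min(1, ηT). Then for every j ∈ {1,…,n}: ∏_{b ≠ j} |x̃_j − x̃_b| ≥ c δ^{ℓ_{(j)}−1}. -/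
/-!
Each perturbed node moves by at most `δ / 3`, since `ρ̄ < 1/3` and `δ < 1`. So perturbed nodes
of the same cluster stay `δ / 3` apart, and nodes of different clusters stay `T - 2δ/3 > T / 3`
apart (as `δ < τδ < T`). The product over `b ≠ j` has `ℓ_{(j)} - 1` factors of the first kind
and `n - ℓ_{(j)}` of the second, so it is at least `m ^ (n - 1) δ ^ (ℓ_{(j)} - 1)` with
`m = min T 1 / 3`.
-/

open Finset

lemma dist_sub_two_mul_le_dist {α : Type*} [PseudoMetricSpace α] {a b a' b' : α} {r : ℝ}
    (ha : dist a' a ≤ r) (hb : dist b' b ≤ r) : dist a b - 2 * r ≤ dist a' b' := by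
  linarith [dist_triangle4 a a' b' b, dist_comm a a']

lemma pow_card_mul_pow_card_filter_le_prod {ι R : Type*} [CommSemiring R] [PartialOrder R]
    [IsOrderedRing R] (s : Finset ι) (p : ι → Prop) [DecidablePred p] (f : ι → R) {m δ : R}
    (hm : 0 ≤ m) (hδ : 0 ≤ δ) (hp : ∀ i ∈ s, p i → m * δ ≤ f i)
    (hnp : ∀ i ∈ s, ¬ p i → m ≤ f i) :
    m ^ #s * δ ^ #(s.filter p) ≤ ∏ i ∈ s, f i := by
  rw [← prod_filter_mul_prod_filter_not s p, ← card_filter_add_card_filter_not p,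
    pow_add, mul_right_comm, ← mul_pow]
  have hmδ : 0 ≤ m * δ := mul_nonneg hm hδ
  gcongr
  · exact prod_nonneg fun i hi => hmδ.trans (hp i (mem_filter.1 hi).1 (mem_filter.1 hi).2)
  · rw [← prod_const]
    exact prod_le_prod (fun _ _ => hmδ) fun i hi => hp i (mem_filter.1 hi).1 (mem_filter.1 hi).2
  · rw [← prod_const]
    exact prod_le_prod (fun _ _ => hm) fun i hi => hnp i (mem_filter.1 hi).1 (mem_filter.1 hi).2

theorem prony_perturbed_node_separation_general
    (n ζ : ℕ)
    (ℓ : Fin ζ → ℕ)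
    (lstar : ℕ)
    (τ η T : ℝ) (hτ : 1 < τ) (hT : 0 < T) :
    ∃ c : ℝ, 0 < c ∧
      ∀ (δ : ℝ) (x xt : Fin n → ℂ) (cl : Fin n → Fin ζ) (ρbar : ℝ),
        0 < δ → δ < 1 → τ * δ < T →
        (∀ j, ‖x j‖ = 1) →
        Function.Injective x →
        (∀ i j, i ≠ j → cl i = cl j →
          δ ≤ ‖x i - x j‖ ∧ ‖x i - x j‖ ≤ τ * δ) →
        (∀ i j, cl i ≠ cl j →
          T ≤ ‖x i - x j‖ ∧ ‖x i - x j‖ ≤ η * T) →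
        (∀ s, (Finset.univ.filter fun j => cl j = s).card = ℓ s) →
        0 < ρbar → ρbar < (1 / 3) * min 1 (η * T) →
        (∀ j, ‖xt j - x j‖ ≤
          ρbar * δ ^ (2 * (lstar - ℓ (cl j)) + 1)) →
        ∀ j : Fin n,
          c * δ ^ (ℓ (cl j) - 1) ≤
            ∏ b ∈ Finset.univ.erase j, ‖xt j - xt b‖ := by
  set m : ℝ := min T 1 / 3 with hm_def
  have hm : 0 < m := by positivity
  have hm_le : m ≤ 1 / 3 ∧ m ≤ T / 3 := by
    constructor <;> rw [hm_def] <;> linarith [min_le_left T 1, min_le_right T 1]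
  refine ⟨m ^ (n - 1), by positivity, ?_⟩
  intro δ x xt cl ρbar hδ0 hδ1 hτδ _ _ hsame hdiff hcard hρ0 hρ hpert j
  have hδT : δ < T := by nlinarith
  have hρ3 : ρbar < 1 / 3 := hρ.trans_le (by linarith [min_le_left 1 (η * T)])
  have hclose : ∀ b, dist (xt b) (x b) ≤ δ / 3 := fun b => by
    rw [dist_eq_norm]
    calc ‖xt b - x b‖ ≤ ρbar * δ ^ (2 * (lstar - ℓ (cl b)) + 1) := hpert b
      _ ≤ ρbar * δ := by gcongr; exact pow_le_of_le_one hδ0.le hδ1.le (by omega)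
      _ ≤ δ / 3 := by nlinarith
  have hsep : ∀ b, ‖x j - x b‖ - 2 * (δ / 3) ≤ ‖xt j - xt b‖ := fun b => by
    simpa only [dist_eq_norm] using dist_sub_two_mul_le_dist (hclose j) (hclose b)
  have hcard_cluster : #((univ.erase j).filter (cl · = cl j)) = ℓ (cl j) - 1 := by
    rw [filter_erase, card_erase_of_mem (by simp), hcard]
  have hcard_erase : #(univ.erase j) = n - 1 := by simp
  rw [← hcard_cluster, ← hcard_erase]
  refine pow_card_mul_pow_card_filter_le_prod _ _ _ hm.le hδ0.le ?_ ?_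
  · intro b hb hcl
    have := (hsame j b (ne_of_mem_erase hb).symm hcl.symm).1
    nlinarith [hsep b]
  · intro b _ hcl
    have := (hdiff j b (Ne.symm hcl)).1
    linarith [hsep b]

/-- Separation lower bound for perturbed nodes: if the perturbed nodes satisfy
`|x̃_j - x_j| ≤ ρ̄ δ^{2(ℓ*-ℓ_{(j)})+1}` for a clustered configuration, then
`∏_{b≠j} |x̃_j - x̃_b| ≥ c δ^{ℓ_{(j)}-1}`. -/
theorem prony_perturbed_node_separation
    (n ζ : ℕ) (hn : 2 ≤ n) (hζ : 1 ≤ ζ)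
    (ℓ : Fin ζ → ℕ) (hℓ : ∀ s, 1 ≤ ℓ s) (hsum : ∑ s, ℓ s = n)
    (lstar : ℕ) (hlstar : lstar = Finset.univ.sup ℓ)
    (τ η T : ℝ) (hτ : 1 < τ) (hη : 1 < η) (hT : 0 < T) :
    ∃ c : ℝ, 0 < c ∧
      ∀ (δ : ℝ) (x xt : Fin n → ℂ) (cl : Fin n → Fin ζ) (ρbar : ℝ),
        0 < δ → δ < 1 → τ * δ < T →
        (∀ j, ‖x j‖ = 1) →
        Function.Injective x →
        (∀ i j, i ≠ j → cl i = cl j →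
          δ ≤ ‖x i - x j‖ ∧ ‖x i - x j‖ ≤ τ * δ) →
        (∀ i j, cl i ≠ cl j →
          T ≤ ‖x i - x j‖ ∧ ‖x i - x j‖ ≤ η * T) →
        (∀ s, (Finset.univ.filter fun j => cl j = s).card = ℓ s) →
        0 < ρbar → ρbar < (1 / 3) * min 1 (η * T) →
        (∀ j, ‖xt j - x j‖ ≤
          ρbar * δ ^ (2 * (lstar - ℓ (cl j)) + 1)) →
        ∀ j : Fin n,
          c * δ ^ (ℓ (cl j) - 1) ≤
            ∏ b ∈ Finset.univ.erase j, ‖xt j - xt b‖ :=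
  prony_perturbed_node_separation_general n ζ ℓ lstar τ η T hτ hT
end
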